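/- arXiv:2401.15271 — 4 statements merged into one kernel-verified Lean document; each statement's English description precedes it below -/
import Mathlib

section
/- Let $(K, |\cdot|_0)$ be a field with the trivial absolute value and $E$ a finite-dimensional $K$-vector space equipped with an ultrametric norm $\|\cdot\|$ compatible with $|\cdot|_0$ (i.e., $\|ax\| = |a|_0\|x\|$). Then the norm $\|\cdot\|$ takes only finitely many values on $E$. -/
/-!
For every `x`, the closed ball `{y | ‖y‖ ≤ ‖x‖}` is a `K`-subspace: the ultrametric inequality
makes it closed under addition, and the trivial absolute value makes it closed under scaling.
Larger norms give strictly larger subspaces, so the dimension of this subspace determines `‖x‖`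
and can take at most `dim E + 1` values.
-/

section

open Module Set

variable {K E : Type*} [Field K] [AddCommGroup E] [Module K E] {N : E → ℝ}

theorem map_zero_le_of_smul_le (hsmul : ∀ (a : K) (x : E), N (a • x) ≤ N x) (x : E) :
    N 0 ≤ N x := by
  simpa using hsmul 0 x

def sublevelSubmodule (hsmul : ∀ (a : K) (x : E), N (a • x) ≤ N x)
    (hultra : ∀ x y : E, N (x + y) ≤ max (N x) (N y)) (x : E) : Submodule K E where
  carrier := {y | N y ≤ N x}
  add_mem' hy hz := (hultra _ _).trans (max_le hy hz)
  zero_mem' := map_zero_le_of_smul_le hsmul x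
  smul_mem' a _ hy := (hsmul a _).trans hy

section

variable {hsmul : ∀ (a : K) (x : E), N (a • x) ≤ N x}
  {hultra : ∀ x y : E, N (x + y) ≤ max (N x) (N y)}

theorem mem_sublevelSubmodule {x y : E} :
    y ∈ sublevelSubmodule hsmul hultra x ↔ N y ≤ N x :=
  Iff.rfl

theorem sublevelSubmodule_lt_of_lt {x y : E} (h : N x < N y) :
    sublevelSubmodule hsmul hultra x < sublevelSubmodule hsmul hultra y :=
  SetLike.lt_iff_le_and_exists.mpr
    ⟨fun _ hz => mem_sublevelSubmodule.mpr ((mem_sublevelSubmodule.mp hz).trans h.le),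
      y, mem_sublevelSubmodule.mpr le_rfl, fun hy => (mem_sublevelSubmodule.mp hy).not_gt h⟩

theorem eq_of_finrank_sublevelSubmodule_eq [FiniteDimensional K E] {x y : E}
    (h : finrank K (sublevelSubmodule hsmul hultra x) =
      finrank K (sublevelSubmodule hsmul hultra y)) :
    N x = N y := by
  by_contra hne
  rcases lt_or_gt_of_ne hne with hxy | hyx
  · exact (Submodule.finrank_lt_finrank_of_lt (sublevelSubmodule_lt_of_lt hxy)).ne h
  · exact (Submodule.finrank_lt_finrank_of_lt (sublevelSubmodule_lt_of_lt hyx)).ne' h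

end

theorem finite_range_of_smul_le_of_ultrametric [FiniteDimensional K E]
    (hsmul : ∀ (a : K) (x : E), N (a • x) ≤ N x)
    (hultra : ∀ x y : E, N (x + y) ≤ max (N x) (N y)) :
    (range N).Finite := by
  let dim (r : range N) : Fin (finrank K E + 1) :=
    ⟨finrank K (sublevelSubmodule hsmul hultra (rangeSplitting N r)),
      Nat.lt_succ_of_le (Submodule.finrank_le _)⟩
  have hdim : Function.Injective dim := fun r s h => by
    rw [Subtype.ext_iff, ← apply_rangeSplitting N r, ← apply_rangeSplitting N s]
    exact eq_of_finrank_sublevelSubmodule_eq (Fin.val_eq_of_eq h)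
  exact finite_coe_iff.mp (Finite.of_injective dim hdim)

end

theorem stmt4_general (K : Type*) [Field K] (E : Type*) [AddCommGroup E] [Module K E]
    [FiniteDimensional K E] [DecidableEq K]
    (N : E → ℝ)
    (hnonneg : ∀ x : E, 0 ≤ N x)
    (hsmul : ∀ (a : K) (x : E), N (a • x) = (if a = 0 then (0 : ℝ) else 1) * N x)
    (hultra : ∀ x y : E, N (x + y) ≤ max (N x) (N y)) :
    (Set.range N).Finite := by
  refine finite_range_of_smul_le_of_ultrametric (fun (a : K) x => ?_) hultra
  rw [hsmul]
  split_ifs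
  · simpa using hnonneg x
  · simp

/-- Over a field `K` with the trivial absolute value, any ultrametric
norm on a finite-dimensional `K`-vector space `E` (compatible with the trivial absolute
value) takes only finitely many values. -/
theorem stmt4 (K : Type*) [Field K] (E : Type*) [AddCommGroup E] [Module K E]
    [FiniteDimensional K E] [DecidableEq K]
    (N : E → ℝ)
    (hzero : ∀ x : E, N x = 0 ↔ x = 0)
    (hnonneg : ∀ x : E, 0 ≤ N x)
    (hsmul : ∀ (a : K) (x : E), N (a • x) = (if a = 0 then (0 : ℝ) else 1) * N x)
    (hultra : ∀ x y : E, N (x + y) ≤ max (N x) (N y)) :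
    (Set.range N).Finite :=
  stmt4_general K E N hnonneg hsmul hultra
end

section
/- Let $E_\bullet = \bigoplus_{D \ge 0} E_D$ be a graded $K$-algebra whose homogeneous parts carry norms $\|\cdot\|_D$ satisfying $\|s \cdot t\|_{m+n} \le e^{f(m)+f(n)}\|s\|_m \|t\|_n$ for all homogeneous $s \in E_m$, $t \in E_n$, where $f(n) = C \log n$ for a constant $C \ge 0$. Define for $s \in E_D$ the spectral norm $\|s\|_{\mathrm{sp},D} = \lim_{n\to\infty} (\|s^n\|_{nD})^{1/n}$. Then this limit exists, and the spectral norms are submultiplicative: $\|s\cdot t\|_{\mathrm{sp},m+n} \le \|s\|_{\mathrm{sp},m}\|t\|_{\mathrm{sp},n}$ for all homogeneous $s \in E_m$, $t \in E_n$. -/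
open Filter

open Finset
lemma sum_aux (N : ℕ) : ∑ i ∈ Finset.range N, ((i:ℝ)+1)/2^i = 4 - (2*N+4)/2^N := by
  induction N with
  | zero => norm_num
  | succ n ih =>
    rw [Finset.sum_range_succ, ih]
    have h : (2:ℝ)^n ≠ 0 := by positivity
    push_cast
    field_simp
    ring

lemma sum_aux' (N : ℕ) : ∑ i ∈ Finset.range N, ((i:ℝ)+1)/2^i ≤ 4 := by
  rw [sum_aux]
  have : (0:ℝ) ≤ (2*N+4)/2^N := by positivity
  linarith

lemma sum_geo' (N : ℕ) : ∑ i ∈ Finset.range N, (1:ℝ)/2^i ≤ 2 := by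
  have := sum_geometric_two_le N
  simpa [one_div, inv_pow] using this

-- Step 1: doubling bound
lemma key1 (b : ℕ → ℝ) (c : ℝ) (hc : 0 ≤ c)
    (hb : ∀ m n : ℕ, 1 ≤ m → 1 ≤ n →
      b (m+n) ≤ c * Real.log (m+n) + (b m + b n))
    (k : ℕ) (hk : 1 ≤ k) :
    ∀ M : ℕ, 1 ≤ M → b (k*M) ≤ M * b k +
      M * ∑ i ∈ Finset.range (Nat.clog 2 M), c * Real.log (k*2^(i+1)) / 2^i := by
  intro M
  induction M using Nat.strong_induction_on with
  | _ M IH =>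
    intro hM
    rcases eq_or_lt_of_le hM with h1 | h2
    · simp [← h1]
    · -- 2 ≤ M
      have h2' : 2 ≤ M := h2
      set M₁ := (M+1)/2 with hM₁def
      set M₂ := M/2 with hM₂def
      have hsum : M₁ + M₂ = M := by omega
      have h1M₁ : 1 ≤ M₁ := by omega
      have h1M₂ : 1 ≤ M₂ := by omega
      have hlt1 : M₁ < M := by omega
      have hlt2 : M₂ < M := by omega
      have hM₂M₁ : M₂ ≤ M₁ := by omega
      set N₁ := Nat.clog 2 M₁ with hN₁def
      -- clog recursion
      have hcl : Nat.clog 2 M = N₁ + 1 := by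
        have h : (M + 2 - 1)/2 = M₁ := by omega
        rw [Nat.clog_of_two_le one_lt_two h2', h]
      -- split
      have hcast : (M₁:ℝ) + M₂ = M := by exact_mod_cast congrArg (Nat.cast (R:=ℝ)) hsum
      have e1 : b (k*M) ≤ c * Real.log ((k:ℝ)*M) + (b (k*M₁) + b (k*M₂)) := by
        have h := hb (k*M₁) (k*M₂) (Nat.one_le_iff_ne_zero.2 (by positivity))
          (Nat.one_le_iff_ne_zero.2 (by positivity))
        have hn : k*M₁ + k*M₂ = k*M := by rw [← Nat.mul_add, hsum]
        rw [hn] at h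
        have hcast2 : ((k*M₁:ℕ):ℝ) + ((k*M₂:ℕ):ℝ) = ((k:ℝ) * M) := by
          push_cast
          rw [← hcast]; ring
        rw [hcast2] at h
        exact h
      have e2 := IH M₁ hlt1 h1M₁
      have e3 := IH M₂ hlt2 h1M₂
      -- notation
      set G₁ : ℝ := ∑ i ∈ Finset.range N₁, c * Real.log (k*2^(i+1)) / 2^i with hG₁
      set G₂ : ℝ := ∑ i ∈ Finset.range (Nat.clog 2 M₂), c * Real.log (k*2^(i+1)) / 2^i with hG₂
      have hterm_nonneg : ∀ i : ℕ, 0 ≤ c * Real.log (k*2^(i+1)) / 2^i := by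
        intro i
        apply div_nonneg _ (by positivity)
        apply mul_nonneg hc
        apply Real.log_nonneg
        have : (1:ℕ) ≤ k*2^(i+1) := Nat.one_le_iff_ne_zero.2 (by positivity)
        exact_mod_cast this
      have hG₂G₁ : G₂ ≤ G₁ := by
        apply Finset.sum_le_sum_of_subset_of_nonneg
        · exact Finset.range_subset_range.2 (Nat.clog_mono_right 2 hM₂M₁)
        · intro i _ _; exact hterm_nonneg i
      -- the extra term absorbs the error
      have hup : M ≤ 2^(N₁+1) := by
        have := Nat.le_pow_clog one_lt_two M₁
        rw [← hN₁def] at this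
        have : 2*M₁ ≤ 2*2^N₁ := by omega
        calc M ≤ 2*M₁ := by omega
        _ ≤ 2^(N₁+1) := by rw [pow_succ]; omega
      have hlow : 2^N₁ ≤ M := by
        rcases eq_or_lt_of_le h1M₁ with hq | hq
        · have : N₁ = 0 := by rw [hN₁def, ← hq]; simp
          rw [this]; omega
        · have hp := Nat.pow_pred_clog_lt_self one_lt_two hq
          rw [← hN₁def] at hp
          simp only [Nat.pred_eq_sub_one] at hp
          have hN₁pos : 1 ≤ N₁ := by
            rw [hN₁def]; exact Nat.clog_pos one_lt_two hq
          have h2p : 2^N₁ = 2 * 2^(N₁-1) := by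
            rw [← pow_succ']
            congr 1
            omega
          omega
      have habs : c * Real.log (k*M) ≤ M * (c * Real.log (k*2^(N₁+1)) / 2^N₁) := by
        have hlog1 : c * Real.log (k*M) ≤ c * Real.log (k*2^(N₁+1)) := by
          apply mul_le_mul_of_nonneg_left _ hc
          apply Real.log_le_log (by positivity)
          have : k*M ≤ k*2^(N₁+1) := Nat.mul_le_mul_left k hup
          exact_mod_cast this
        have hfac : (1:ℝ) ≤ (M:ℝ)/2^N₁ := by
          rw [le_div_iff₀ (by positivity)]
          rw [one_mul]
          exact_mod_cast hlow
        have hlognn : 0 ≤ c * Real.log (k*2^(N₁+1)) := by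
          apply mul_nonneg hc
          apply Real.log_nonneg
          have : (1:ℕ) ≤ k*2^(N₁+1) := Nat.one_le_iff_ne_zero.2 (by positivity)
          exact_mod_cast this
        calc c * Real.log (k*M) ≤ c * Real.log (k*2^(N₁+1)) := hlog1
          _ = 1 * (c * Real.log (k*2^(N₁+1))) := by ring
          _ ≤ ((M:ℝ)/2^N₁) * (c * Real.log (k*2^(N₁+1))) := by
              exact mul_le_mul_of_nonneg_right hfac hlognn
          _ = M * (c * Real.log (k*2^(N₁+1)) / 2^N₁) := by ring
      -- assemble
      rw [hcl, Finset.sum_range_succ]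
      have hM₁nn : (0:ℝ) ≤ M₁ := by positivity
      have hM₂nn : (0:ℝ) ≤ M₂ := by positivity
      have hGsum : (M₁:ℝ) * G₁ + (M₂:ℝ) * G₂ ≤ (M:ℝ) * G₁ := by
        have h' : (M₂:ℝ) * G₂ ≤ (M₂:ℝ) * G₁ := mul_le_mul_of_nonneg_left hG₂G₁ hM₂nn
        calc (M₁:ℝ)*G₁ + M₂*G₂ ≤ (M₁:ℝ)*G₁ + M₂*G₁ := by linarith
          _ = ((M₁:ℝ)+M₂)*G₁ := by ring
          _ = M*G₁ := by rw [hcast]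
      have hkM₁ : ((k*M₁ : ℕ):ℝ) = (k:ℝ)*(M₁:ℝ) := by push_cast; ring
      have hbk : (M₁:ℝ)*b k + (M₂:ℝ)*b k = (M:ℝ)*b k := by rw [← hcast]; ring
      calc b (k*M) ≤ c * Real.log ((k:ℝ)*M) + (b (k*M₁) + b (k*M₂)) := e1
        _ ≤ c * Real.log ((k:ℝ)*M) + ((M₁ * b k + M₁ * G₁) + (M₂ * b k + M₂ * G₂)) := by
            linarith [e2, e3]
        _ ≤ M * (c * Real.log (k*2^(N₁+1)) / 2^N₁) + (M * b k + M * G₁) := by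
            linarith [habs, hGsum, hbk]
        _ = M * b k + M * (G₁ + c * Real.log (k*2^(N₁+1)) / 2^N₁) := by ring

lemma key2 (b : ℕ → ℝ) (c : ℝ) (hc : 0 ≤ c)
    (hb : ∀ m n : ℕ, 1 ≤ m → 1 ≤ n →
      b (m+n) ≤ c * Real.log (m+n) + (b m + b n))
    (k : ℕ) (hk : 1 ≤ k) (M : ℕ) (hM : 1 ≤ M) :
    b (k*M) ≤ M * (b k + c*(4*Real.log 2 + 2*Real.log k)) := by
  have h := key1 b c hc hb k hk M hM
  set N := Nat.clog 2 M with hN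
  have hG : ∑ i ∈ Finset.range N, c * Real.log ((k:ℝ)*2^(i+1)) / 2^i
      ≤ c*(4*Real.log 2 + 2*Real.log k) := by
    have hlk : 0 ≤ Real.log k := Real.log_nonneg (by exact_mod_cast hk)
    have hl2 : 0 ≤ Real.log 2 := Real.log_nonneg one_le_two
    have hterm : ∀ i ∈ Finset.range N, c * Real.log ((k:ℝ)*2^(i+1)) / 2^i
        ≤ c * (Real.log k * ((1:ℝ)/2^i) + Real.log 2 * (((i:ℝ)+1)/2^i)) := by
      intro i _
      have hlog : Real.log ((k:ℝ)*2^(i+1)) = Real.log k + ((i:ℝ)+1) * Real.log 2 := by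
        rw [Real.log_mul (by positivity) (by positivity), Real.log_pow]
        push_cast; ring
      rw [hlog]
      apply le_of_eq
      ring
    have heq : ∑ i ∈ Finset.range N, c * (Real.log k * ((1:ℝ)/2^i) + Real.log 2 * (((i:ℝ)+1)/2^i))
        = c * (Real.log k * (∑ i ∈ Finset.range N, (1:ℝ)/2^i)
             + Real.log 2 * (∑ i ∈ Finset.range N, ((i:ℝ)+1)/2^i)) := by
      rw [Finset.mul_sum, Finset.mul_sum, ← Finset.sum_add_distrib, Finset.mul_sum]
    have h1 := sum_geo' N
    have h2 := sum_aux' N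
    calc ∑ i ∈ Finset.range N, c * Real.log ((k:ℝ)*2^(i+1)) / 2^i
        ≤ ∑ i ∈ Finset.range N, c * (Real.log k * ((1:ℝ)/2^i) + Real.log 2 * (((i:ℝ)+1)/2^i)) :=
          Finset.sum_le_sum hterm
      _ = c * (Real.log k * (∑ i ∈ Finset.range N, (1:ℝ)/2^i)
             + Real.log 2 * (∑ i ∈ Finset.range N, ((i:ℝ)+1)/2^i)) := heq
      _ ≤ c * (Real.log k * 2 + Real.log 2 * 4) := by gcongr
      _ = c*(4*Real.log 2 + 2*Real.log k) := by ring
  have hMnn : (0:ℝ) ≤ (M:ℝ) := by positivity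
  have := mul_le_mul_of_nonneg_left hG hMnn
  linarith

lemma key3 (b : ℕ → ℝ) (c : ℝ) (hc : 0 ≤ c)
    (hb : ∀ m n : ℕ, 1 ≤ m → 1 ≤ n →
      b (m+n) ≤ c * Real.log (m+n) + (b m + b n))
    (k : ℕ) (hk : 1 ≤ k) (n : ℕ) (hn : k ≤ n) :
    b n ≤ ((n/k : ℕ):ℝ) * (b k + c*(4*Real.log 2 + 2*Real.log k))
          + ((∑ j ∈ Finset.range k, |b j|) + c * Real.log n) := by
  set M := n/k with hM
  set r := n % k with hr
  have hMpos : 1 ≤ M := Nat.one_le_div_iff (by omega) |>.2 hn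
  have hrk : r < k := Nat.mod_lt _ (by omega)
  have hnkey : k*M + r = n := by rw [hM, hr]; exact Nat.div_add_mod n k
  have hBnn : (0:ℝ) ≤ ∑ j ∈ Finset.range k, |b j| :=
    Finset.sum_nonneg fun j _ => abs_nonneg _
  have hlognn : 0 ≤ c * Real.log n := by
    apply mul_nonneg hc
    apply Real.log_nonneg
    have : (1:ℕ) ≤ n := by omega
    exact_mod_cast this
  have h2 := key2 b c hc hb k hk M hMpos
  rcases Nat.eq_zero_or_pos r with h0 | hpos
  · have hn' : n = k*M := by omega
    calc b n = b (k*M) := by rw [← hn']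
      _ ≤ M * (b k + c*(4*Real.log 2 + 2*Real.log k)) := h2
      _ ≤ _ := by linarith
  · have hrB : b r ≤ ∑ j ∈ Finset.range k, |b j| := by
      calc b r ≤ |b r| := le_abs_self _
        _ ≤ _ := Finset.single_le_sum (f := fun j => |b j|)
            (fun j _ => abs_nonneg _) (Finset.mem_range.2 hrk)
    have h3 := hb (k*M) r (Nat.one_le_iff_ne_zero.2 (by positivity)) hpos
    rw [hnkey] at h3
    have hcast : ((k*M:ℕ):ℝ) + (r:ℝ) = (n:ℝ) := by exact_mod_cast congrArg (Nat.cast (R:=ℝ)) hnkey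
    rw [hcast] at h3
    linarith

lemma logdiv_tendsto : Tendsto (fun n : ℕ => Real.log n / n) atTop (nhds 0) := by
  have h := Real.isLittleO_log_id_atTop.tendsto_div_nhds_zero
  have h2 : Tendsto (fun n : ℕ => (n:ℝ)) atTop atTop := tendsto_natCast_atTop_atTop
  simpa [Function.comp_def] using h.comp h2

lemma core (a : ℕ → ℝ) (h0 : ∀ n, 0 ≤ a n) (c : ℝ) (hc : 0 ≤ c)
    (hs : ∀ m n : ℕ, 1 ≤ m → 1 ≤ n →
      a (m+n) ≤ Real.exp (c * Real.log (m+n)) * (a m * a n)) :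
    ∃ L : ℝ, 0 ≤ L ∧ Tendsto (fun n : ℕ => (a n) ^ ((1:ℝ)/n)) atTop (nhds L) := by
  by_cases hz : ∃ k, 1 ≤ k ∧ a k = 0
  · obtain ⟨k, hk, hak⟩ := hz
    refine ⟨0, le_refl 0, ?_⟩
    have hev : ∀ n, k ≤ n → a n = 0 := by
      intro n hn
      rcases eq_or_lt_of_le hn with h | h
      · rw [← h]; exact hak
      · have h1 : k + (n - k) = n := by omega
        have h2 := hs k (n-k) hk (by omega)
        rw [h1, hak] at h2
        simp only [zero_mul, mul_zero] at h2
        exact le_antisymm h2 (h0 n)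
    have heq : (fun _ : ℕ => (0:ℝ)) =ᶠ[atTop] fun n => a n ^ ((1:ℝ)/n) := by
      filter_upwards [eventually_ge_atTop (max k 1)] with n hn
      have hn1 : 1 ≤ n := le_trans (le_max_right _ _) hn
      have hne : (1:ℝ)/n ≠ 0 := by
        have : (0:ℝ) < n := by exact_mod_cast hn1
        exact one_div_ne_zero (ne_of_gt this)
      rw [hev n (le_trans (le_max_left _ _) hn), Real.zero_rpow hne]
    exact Tendsto.congr' heq tendsto_const_nhds
  · push_neg at hz
    have hpos : ∀ n, 1 ≤ n → 0 < a n := fun n hn => lt_of_le_of_ne (h0 n) (Ne.symm (hz n hn))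
    set b : ℕ → ℝ := fun n => Real.log (a n) with hbdef
    have hb : ∀ m n : ℕ, 1 ≤ m → 1 ≤ n → b (m+n) ≤ c * Real.log (m+n) + (b m + b n) := by
      intro m n hm hn
      have h1 := hs m n hm hn
      have h2 : Real.log (a (m+n)) ≤ Real.log (Real.exp (c * Real.log ((m:ℝ)+n)) * (a m * a n)) :=
        Real.log_le_log (hpos _ (by omega)) h1
      rw [Real.log_mul (Real.exp_ne_zero _) (mul_pos (hpos m hm) (hpos n hn)).ne', Real.log_exp,
        Real.log_mul (ne_of_gt (hpos m hm)) (ne_of_gt (hpos n hn))] at h2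
      exact h2
    set T : ℕ → ℝ := fun k => c*(4*Real.log 2 + 2*Real.log k) with hTdef
    set g : ℕ → ℝ := fun i => Real.exp ((b (i+1) + T (i+1))/((i:ℝ)+1)) with hgdef
    have hbdd : BddBelow (Set.range g) := by
      refine ⟨0, ?_⟩
      rintro x ⟨i, rfl⟩
      exact (Real.exp_pos _).le
    set L := ⨅ i : ℕ, g i with hL
    have hLnn : 0 ≤ L := le_ciInf fun i => (Real.exp_pos _).le
    have hfn : ∀ n : ℕ, 1 ≤ n → a n ^ ((1:ℝ)/n) = Real.exp (b n / n) := by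
      intro n hn
      rw [Real.rpow_def_of_pos (hpos n hn), mul_one_div]
    have hT0 : Tendsto (fun n : ℕ => T n / n) atTop (nhds 0) := by
      have heq2 : (fun n : ℕ => T n / n)
          = fun n : ℕ => (c*4*Real.log 2) * (1/(n:ℝ)) + (c*2) * (Real.log n / n) := by
        funext n; simp only [hTdef]; ring
      rw [heq2]
      simpa using ((tendsto_one_div_atTop_nhds_zero_nat.const_mul (c*4*Real.log 2)).add
        (logdiv_tendsto.const_mul (c*2)))
    have hlow : ∀ n : ℕ, 1 ≤ n → L * Real.exp (-(T n)/n) ≤ a n ^ ((1:ℝ)/n) := by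
      intro n hn
      have hn0 : (n:ℝ) ≠ 0 := by
        have : (0:ℝ) < n := by exact_mod_cast hn
        exact ne_of_gt this
      have h1 : L ≤ Real.exp ((b n + T n)/(n:ℝ)) := by
        have h := ciInf_le hbdd (n-1)
        have he : g (n-1) = Real.exp ((b n + T n)/(n:ℝ)) := by
          have h' : n - 1 + 1 = n := by omega
          have h'' : ((n-1:ℕ):ℝ) + 1 = (n:ℝ) := by
            rw [Nat.cast_sub hn]; push_cast; ring
          simp only [hgdef, h', h'']
        rw [hL]
        exact le_trans h (le_of_eq he)
      calc L * Real.exp (-(T n)/n)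
          ≤ Real.exp ((b n + T n)/n) * Real.exp (-(T n)/n) :=
            mul_le_mul_of_nonneg_right h1 (Real.exp_pos _).le
        _ = Real.exp (b n / n) := by
            rw [← Real.exp_add]; congr 1; field_simp; ring
        _ = a n ^ ((1:ℝ)/n) := (hfn n hn).symm
    have hlowlim : Tendsto (fun n : ℕ => L * Real.exp (-(T n)/n)) atTop (nhds L) := by
      have h1 : Tendsto (fun n : ℕ => -(T n)/n) atTop (nhds 0) := by
        have := hT0.neg
        simpa [neg_div] using this
      have h2 : Tendsto (fun n : ℕ => Real.exp (-(T n)/n)) atTop (nhds 1) := by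
        have := (Real.continuous_exp.tendsto 0).comp h1
        simpa [Function.comp_def] using this
      simpa using h2.const_mul L
    refine ⟨L, hLnn, ?_⟩
    rw [tendsto_order]
    constructor
    · intro x hx
      have hev2 : ∀ᶠ n in atTop, x < L * Real.exp (-(T n)/n) :=
        hlowlim.eventually (eventually_gt_nhds hx)
      filter_upwards [hev2, eventually_ge_atTop 1] with n h1 h2
      exact lt_of_lt_of_le h1 (hlow n h2)
    · intro x hx
      rw [hL] at hx
      obtain ⟨i, hi⟩ := exists_lt_of_ciInf_lt hx
      set k := i + 1 with hkdef
      have hk : 1 ≤ k := by omega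
      have hkR : (0:ℝ) < k := by exact_mod_cast hk
      set B := ∑ j ∈ Finset.range k, |b j| with hBdef
      set u : ℕ → ℝ := fun n => ((n/k : ℕ):ℝ)/n * (b k + T k) + (B + c * Real.log n)/n with hu
      have hbu : ∀ n, k ≤ n → b n / n ≤ u n := by
        intro n hkn
        have hn : 1 ≤ n := le_trans hk hkn
        have hnp : (0:ℝ) < n := by exact_mod_cast hn
        have h3 := key3 b c hc hb k hk n hkn
        calc b n / n ≤ (((n/k:ℕ):ℝ) * (b k + T k) + (B + c*Real.log n)) / n := by
              apply (div_le_div_iff_of_pos_right hnp).2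
              exact h3
          _ = u n := by simp only [hu]; ring
      have hdiv : Tendsto (fun n : ℕ => ((n/k:ℕ):ℝ)/(n:ℝ)) atTop (nhds (1/(k:ℝ))) := by
        apply tendsto_of_tendsto_of_tendsto_of_le_of_le'
          (g := fun n : ℕ => 1/(k:ℝ) - 1/(n:ℝ)) (h := fun _ : ℕ => 1/(k:ℝ))
        · simpa using (tendsto_const_nhds (x := 1/(k:ℝ))).sub tendsto_one_div_atTop_nhds_zero_nat
        · exact tendsto_const_nhds
        · filter_upwards [eventually_ge_atTop 1] with n hn
          have hnR : (0:ℝ) < n := by exact_mod_cast hn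
          have hq : (n:ℕ) ≤ k * (n/k) + k := by
            have h1 := Nat.div_add_mod n k
            have h2 : n % k < k := Nat.mod_lt _ (by omega)
            omega
          have hqR : (n:ℝ) ≤ (k:ℝ) * ((n/k:ℕ):ℝ) + k := by exact_mod_cast hq
          rw [div_sub_div _ _ (ne_of_gt hkR) (ne_of_gt hnR),
            div_le_div_iff₀ (by positivity) hnR]
          have h5 : ((n:ℝ) - k) * n ≤ ((k:ℝ) * ((n/k:ℕ):ℝ)) * n :=
            mul_le_mul_of_nonneg_right (by linarith) hnR.le
          nlinarith [h5]
        · filter_upwards [eventually_ge_atTop 1] with n hn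
          have hnR : (0:ℝ) < n := by exact_mod_cast hn
          rw [div_le_div_iff₀ hnR hkR]
          have h6 : (n/k) * k ≤ n := Nat.div_mul_le_self n k
          have hcast : ((n/k:ℕ):ℝ) * k ≤ n := by exact_mod_cast h6
          nlinarith [hcast]
      have h4 : Tendsto (fun n : ℕ => (B + c * Real.log n)/(n:ℝ)) atTop (nhds 0) := by
        have heq3 : (fun n : ℕ => (B + c * Real.log n)/(n:ℝ))
            = fun n : ℕ => B * (1/(n:ℝ)) + c * (Real.log n / n) := by
          funext n; ring
        rw [heq3]
        simpa using (tendsto_one_div_atTop_nhds_zero_nat.const_mul B).add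
          (logdiv_tendsto.const_mul c)
      have huT : Tendsto u atTop (nhds ((b k + T k)/(k:ℝ))) := by
        have h7 := (hdiv.mul_const (b k + T k)).add h4
        have h8 : (1/(k:ℝ)) * (b k + T k) + 0 = (b k + T k)/(k:ℝ) := by ring
        rwa [h8] at h7
      have hexp : Tendsto (fun n => Real.exp (u n)) atTop
          (nhds (Real.exp ((b k + T k)/(k:ℝ)))) := (Real.continuous_exp.tendsto _).comp huT
      have hgi : Real.exp ((b k + T k)/(k:ℝ)) = g i := by
        simp only [hgdef, hkdef]
        push_cast
        ring_nf
      have hev3 : ∀ᶠ n in atTop, Real.exp (u n) < x :=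
        hexp.eventually (eventually_lt_nhds (by rw [hgi]; exact hi))
      filter_upwards [hev3, eventually_ge_atTop k] with n h5 h6
      have hn1 : 1 ≤ n := le_trans hk h6
      calc a n ^ ((1:ℝ)/n) = Real.exp (b n / n) := hfn n hn1
        _ ≤ Real.exp (u n) := Real.exp_le_exp.2 (hbu n h6)
        _ < x := h5

/-- For a graded `K`-algebra (realized as a grading `ℰ` of a commutative
`K`-algebra `A`) whose homogeneous parts carry norms satisfying
`‖s·t‖_{m+n} ≤ e^{f(m)+f(n)} ‖s‖_m ‖t‖_n` with `f(n) = C log n`, the spectral norm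
`‖s‖_{sp,D} = lim_n ‖sⁿ‖_{nD}^{1/n}` exists, and the spectral norms are
submultiplicative. -/
theorem stmt5 (K A : Type*) [Field K] [CommRing A] [Algebra K A]
    (ℰ : ℕ → Submodule K A)
    (hgr : ∀ m n : ℕ, ∀ s ∈ ℰ m, ∀ t ∈ ℰ n, s * t ∈ ℰ (m + n))
    (NN : ℕ → A → ℝ)
    (hnonneg : ∀ (D : ℕ) (s : A), 0 ≤ NN D s)
    (C : ℝ) (hC : 0 ≤ C)
    (hsub : ∀ m n : ℕ, 1 ≤ m → 1 ≤ n → ∀ s ∈ ℰ m, ∀ t ∈ ℰ n,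
      NN (m + n) (s * t)
        ≤ Real.exp (C * Real.log m + C * Real.log n) * (NN m s * NN n t)) :
    ∃ sp : ℕ → A → ℝ,
      (∀ D : ℕ, 1 ≤ D → ∀ s ∈ ℰ D,
        Tendsto (fun n : ℕ => (NN (n * D) (s ^ n)) ^ ((1 : ℝ) / n)) atTop
          (nhds (sp D s))) ∧
      (∀ m n : ℕ, 1 ≤ m → 1 ≤ n → ∀ s ∈ ℰ m, ∀ t ∈ ℰ n,
        sp (m + n) (s * t) ≤ sp m s * sp n t) := by
  have hpow : ∀ (D : ℕ) (s : A), s ∈ ℰ D → ∀ n : ℕ, 1 ≤ n → s ^ n ∈ ℰ (n * D) := by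
    intro D s hsD n hn
    induction n with
    | zero => omega
    | succ m ih =>
      rcases Nat.eq_zero_or_pos m with h0 | hm
      · subst h0; simpa using hsD
      · have h1 := ih hm
        have h2 := hgr (m*D) D _ h1 s hsD
        have heq : (m+1)*D = m*D + D := by ring
        rw [heq, pow_succ]
        exact h2
  have hex : ∀ D : ℕ, 1 ≤ D → ∀ s : A, s ∈ ℰ D →
      ∃ L : ℝ, 0 ≤ L ∧ Tendsto (fun n : ℕ => (NN (n * D) (s ^ n)) ^ ((1 : ℝ) / n)) atTop
        (nhds L) := by
    intro D hD s hsD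
    have hlog2 : (0:ℝ) < Real.log 2 := Real.log_pos one_lt_two
    have hD1' : (1:ℝ) ≤ (D:ℝ) := by exact_mod_cast hD
    have hlogD : 0 ≤ Real.log D := Real.log_nonneg hD1'
    set c : ℝ := 2*C + 2*C*Real.log D/Real.log 2 with hcdef
    have hc : 0 ≤ c := by
      apply add_nonneg (by linarith)
      positivity
    apply core (fun n => NN (n*D) (s^n)) (fun n => hnonneg _ _) c hc
    intro m n hm hn
    have hmem1 := hpow D s hsD m hm
    have hmem2 := hpow D s hsD n hn
    have h1 := hsub (m*D) (n*D) (Nat.one_le_iff_ne_zero.2 (by positivity))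
      (Nat.one_le_iff_ne_zero.2 (by positivity)) (s^m) hmem1 (s^n) hmem2
    rw [← pow_add] at h1
    have hDeq : m*D + n*D = (m+n)*D := by ring
    rw [hDeq] at h1
    refine le_trans h1 ?_
    apply mul_le_mul_of_nonneg_right _ (mul_nonneg (hnonneg _ _) (hnonneg _ _))
    rw [Real.exp_le_exp]
    have hm1 : (1:ℝ) ≤ (m:ℝ) := by exact_mod_cast hm
    have hn1 : (1:ℝ) ≤ (n:ℝ) := by exact_mod_cast hn
    have e1 : Real.log ((m*D:ℕ):ℝ) = Real.log m + Real.log D := by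
      push_cast
      rw [Real.log_mul (by linarith) (by linarith)]
    have e2 : Real.log ((n*D:ℕ):ℝ) = Real.log n + Real.log D := by
      push_cast
      rw [Real.log_mul (by linarith) (by linarith)]
    rw [e1, e2]
    have hlogmn : Real.log 2 ≤ Real.log ((m:ℝ)+n) :=
      Real.log_le_log (by norm_num) (by linarith)
    have hlm : Real.log (m:ℝ) ≤ Real.log ((m:ℝ)+n) := Real.log_le_log (by linarith) (by linarith)
    have hln : Real.log (n:ℝ) ≤ Real.log ((n:ℝ)+m) := Real.log_le_log (by linarith) (by linarith)
    have hln' : Real.log (n:ℝ) ≤ Real.log ((m:ℝ)+n) := by rwa [add_comm (m:ℝ) n]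
    have h2 : 2*C*Real.log D ≤ (2*C*Real.log D/Real.log 2) * Real.log ((m:ℝ)+n) := by
      rw [div_mul_eq_mul_div, le_div_iff₀ hlog2]
      apply mul_le_mul_of_nonneg_left hlogmn (by positivity)
    have hexpand : c * Real.log ((m:ℝ)+n)
        = 2*C*Real.log ((m:ℝ)+n) + (2*C*Real.log D/Real.log 2) * Real.log ((m:ℝ)+n) := by
      rw [hcdef]; ring
    have h3 : C * Real.log (m:ℝ) ≤ C * Real.log ((m:ℝ)+n) := mul_le_mul_of_nonneg_left hlm hC
    have h4 : C * Real.log (n:ℝ) ≤ C * Real.log ((m:ℝ)+n) := mul_le_mul_of_nonneg_left hln' hC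
    rw [hcdef]
    nlinarith [h2, h3, h4]
  refine ⟨fun D s => limUnder atTop (fun n : ℕ => (NN (n * D) (s ^ n)) ^ ((1 : ℝ) / n)), ?_, ?_⟩
  · intro D hD s hsD
    obtain ⟨L, _, hL⟩ := hex D hD s hsD
    exact tendsto_nhds_limUnder ⟨L, hL⟩
  · intro m n hm hn s hsE t htE
    obtain ⟨L1, hL1nn, hL1⟩ := hex m hm s hsE
    obtain ⟨L2, hL2nn, hL2⟩ := hex n hn t htE
    obtain ⟨L3, hL3nn, hL3⟩ := hex (m+n) (by omega) (s*t) (hgr m n s hsE t htE)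
    dsimp only
    rw [hL1.limUnder_eq, hL2.limUnder_eq, hL3.limUnder_eq]
    set F : ℕ → ℝ := fun j =>
      Real.exp ((C * Real.log ((j*m:ℕ):ℝ) + C * Real.log ((j*n:ℕ):ℝ)) * ((1:ℝ)/j))
        * ((NN (j*m) (s^j))^((1:ℝ)/j) * (NN (j*n) (t^j))^((1:ℝ)/j)) with hF
    have hX : Tendsto (fun j : ℕ =>
        (C * Real.log ((j*m:ℕ):ℝ) + C * Real.log ((j*n:ℕ):ℝ)) * ((1:ℝ)/j)) atTop (nhds 0) := by
      have hxp : Tendsto (fun j : ℕ => (2*C)*(Real.log j/j)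
          + (C*Real.log m + C*Real.log n)*(1/(j:ℝ))) atTop (nhds 0) := by
        simpa using (logdiv_tendsto.const_mul (2*C)).add
          (tendsto_one_div_atTop_nhds_zero_nat.const_mul (C*Real.log m + C*Real.log n))
      apply Tendsto.congr' _ hxp
      filter_upwards [eventually_ge_atTop 1] with j hj
      have hj1 : (1:ℝ) ≤ (j:ℝ) := by exact_mod_cast hj
      have hm1 : (1:ℝ) ≤ (m:ℝ) := by exact_mod_cast hm
      have hn1 : (1:ℝ) ≤ (n:ℝ) := by exact_mod_cast hn
      have em : Real.log ((j*m:ℕ):ℝ) = Real.log j + Real.log m := by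
        push_cast
        rw [Real.log_mul (by linarith) (by linarith)]
      have en : Real.log ((j*n:ℕ):ℝ) = Real.log j + Real.log n := by
        push_cast
        rw [Real.log_mul (by linarith) (by linarith)]
      rw [em, en]
      ring
    have hmul : Tendsto F atTop (nhds (1 * (L1 * L2))) := by
      rw [hF]
      apply Tendsto.mul _ (hL1.mul hL2)
      have := (Real.continuous_exp.tendsto 0).comp hX
      simpa [Function.comp_def] using this
    have hle : ∀ᶠ j in atTop,
        (NN (j*(m+n)) ((s*t)^j))^((1:ℝ)/j) ≤ F j := by
      filter_upwards [eventually_ge_atTop 1] with j hj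
      have h1 := hsub (j*m) (j*n) (Nat.one_le_iff_ne_zero.2 (by positivity))
        (Nat.one_le_iff_ne_zero.2 (by positivity)) (s^j) (hpow m s hsE j hj)
        (t^j) (hpow n t htE j hj)
      have hidx : j*m + j*n = j*(m+n) := by ring
      have hst : s^j * t^j = (s*t)^j := (mul_pow s t j).symm
      rw [hidx, hst] at h1
      have h2 := Real.rpow_le_rpow (hnonneg _ _) h1
        (by positivity : (0:ℝ) ≤ (1:ℝ)/(j:ℝ))
      rw [Real.mul_rpow (Real.exp_pos _).le (mul_nonneg (hnonneg _ _) (hnonneg _ _)),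
        Real.mul_rpow (hnonneg _ _) (hnonneg _ _),
        Real.rpow_def_of_pos (Real.exp_pos _), Real.log_exp] at h2
      exact h2
    have hfin := le_of_tendsto_of_tendsto hL3 hmul hle
    rwa [one_mul] at hfin
end

section
/- Let $(a_n)_{n\ge 1}$ be a sequence of real numbers such that $a_{m+n} \le a_m + a_n + C\log(m) + C\log(n)$ for all $m, n \ge 1$, where $C \ge 0$ is a constant, and suppose $\sup_n a_n/n < +\infty$. Then the sequence $(a_n/n)_{n\ge 1}$ converges in $\mathbb{R} \cup \{-\infty\}$, with limit $\inf_{n\ge 1} (a_n + 2C\log(2n))/n$ when that infimum is finite. -/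
/-!
Put `b n = a n + 2C log (2n)`. Applying the hypothesis with `m = n` gives `b (2n) ≤ 2 b n`, hence
`b (2^k n) ≤ 2^k b n`. Writing `m = 2^k n + r` with `r < m / 2` and recursing on `r` yields
`a m ≤ (m / n) b n + O(log² m)`, so `limsup a m / m ≤ b n / n` for every `n`. In the other direction
`a m / m = b m / m - O(log m / m)`, so `liminf a m / m ≥ inf_n b n / n`.
-/

open Filter Real Topology

namespace LogFekete

def IsLogSubadditive (a : ℕ → ℝ) (C : ℝ) : Prop :=
  ∀ m n : ℕ, 1 ≤ m → 1 ≤ n → a (m + n) ≤ a m + a n + C * log m + C * log n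

noncomputable def corrected (a : ℕ → ℝ) (C : ℝ) (n : ℕ) : ℝ := a n + 2 * C * log (2 * n)

theorem exists_two_pow_mul_le_lt {n m : ℕ} (hn : 1 ≤ n) (hnm : n ≤ m) :
    ∃ k : ℕ, 2 ^ k * n ≤ m ∧ m < 2 * (2 ^ k * n) := by
  refine ⟨Nat.log 2 (m / n), ?_, ?_⟩
  · calc 2 ^ Nat.log 2 (m / n) * n ≤ m / n * n :=
          Nat.mul_le_mul_right n (Nat.pow_log_le_self 2 (Nat.div_pos hnm hn).ne')
      _ ≤ m := Nat.div_mul_le_self m n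
  · have := (Nat.div_lt_iff_lt_mul hn).1 (Nat.lt_pow_succ_log_self one_lt_two (m / n))
    rw [pow_succ] at this
    linarith

theorem tendsto_log_two_mul_pow_div_atTop (k : ℕ) :
    Tendsto (fun m : ℕ => log (2 * m) ^ k / m) atTop (𝓝 0) := by
  have hlim := (tendsto_pow_log_div_mul_add_atTop (1 / 2) 0 k (by norm_num)).comp
    (tendsto_natCast_atTop_atTop.const_mul_atTop two_pos)
  refine hlim.congr fun m => ?_
  simp only [Function.comp_apply]
  congr 1
  ring

theorem log_two_mul_sq_add_le {C r m : ℝ} (hC : 0 ≤ C) (hr : 1 ≤ 2 * r) (hrm : 2 * r ≤ m) :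
    C / log 2 * log (2 * r) ^ 2 + 2 * C * log m ≤ C / log 2 * log (2 * m) ^ 2 := by
  have hlog2 : 0 < log 2 := log_pos one_lt_two
  have h0 : 0 ≤ log (2 * r) := log_nonneg hr
  have hle : log (2 * r) ≤ log m := log_le_log (by linarith) hrm
  have hsq : log (2 * r) ^ 2 ≤ log m ^ 2 := pow_le_pow_left₀ h0 hle 2
  have hexp : C / log 2 * log (2 * m) ^ 2
      = C * log 2 + 2 * C * log m + C / log 2 * log m ^ 2 := by
    rw [log_mul two_ne_zero (by linarith)]
    field_simp
    ring
  rw [hexp]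
  have := mul_le_mul_of_nonneg_left hsq (div_nonneg hC hlog2.le)
  nlinarith

variable {a : ℕ → ℝ} {C : ℝ}

theorem le_corrected (hC : 0 ≤ C) {n : ℕ} (hn : 1 ≤ n) : a n ≤ corrected a C n := by
  have : 0 ≤ log (2 * (n : ℝ)) := log_nonneg (by norm_cast; omega)
  unfold corrected
  nlinarith

theorem corrected_two_mul_le (hsub : IsLogSubadditive a C) {n : ℕ} (hn : 1 ≤ n) :
    corrected a C (2 * n) ≤ 2 * corrected a C n := by
  have hn0 : (0 : ℝ) < n := by exact_mod_cast hn
  have h := hsub n n hn hn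
  have hlog : log (2 * (2 * n : ℕ)) = log (2 * n) + log 2 := by
    push_cast
    rw [mul_comm (2 : ℝ), log_mul (by positivity) two_ne_zero]
  have hlog' : log (2 * (n : ℝ)) = log 2 + log n := log_mul two_ne_zero hn0.ne'
  unfold corrected
  rw [hlog, hlog']
  rw [← two_mul] at h
  linarith

theorem corrected_two_pow_mul_le (hsub : IsLogSubadditive a C) {n : ℕ} (hn : 1 ≤ n) (k : ℕ) :
    corrected a C (2 ^ k * n) ≤ 2 ^ k * corrected a C n := by
  induction k with
  | zero => simp
  | succ k ih =>
    calc corrected a C (2 ^ (k + 1) * n) = corrected a C (2 * (2 ^ k * n)) := by ring_nf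
      _ ≤ 2 * corrected a C (2 ^ k * n) :=
          corrected_two_mul_le hsub (Nat.one_le_iff_ne_zero.2 (by positivity))
      _ ≤ 2 ^ (k + 1) * corrected a C n := by rw [pow_succ]; linarith

/-- Splitting `m = 2^k n + r` with `r < m / 2` and recursing on `r` costs `2C log m` per step;
the coefficient `C / log 2` is chosen so that `C / log 2 * log (2m) ^ 2` grows by at least that much
when `m` doubles. -/
theorem le_div_mul_corrected_add_log_sq (hC : 0 ≤ C) (hsub : IsLogSubadditive a C)
    {n : ℕ} (hn : 1 ≤ n) : ∃ D : ℝ, ∀ m : ℕ, 1 ≤ m →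
      a m ≤ m / n * corrected a C n + D + C / log 2 * log (2 * m) ^ 2 := by
  have hn0 : (0 : ℝ) < n := by exact_mod_cast hn
  obtain ⟨D₀, hD₀⟩ := ((Set.finite_lt_nat n).image a).bddAbove
  refine ⟨max D₀ 0 + |corrected a C n|, fun m => ?_⟩
  have hD : 0 ≤ max D₀ 0 + |corrected a C n| := by positivity
  induction m using Nat.strong_induction_on with
  | _ m ih =>
  intro hm
  have hlogsq : 0 ≤ C / log 2 * log (2 * (m : ℝ)) ^ 2 := by positivity
  rcases lt_or_ge m n with hmn | hnm
  · have ham : a m ≤ D₀ := hD₀ ⟨m, hmn, rfl⟩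
    have hratio : (m : ℝ) / n ≤ 1 := (div_le_one hn0).2 (by exact_mod_cast hmn.le)
    have : -|corrected a C n| ≤ m / n * corrected a C n := by
      nlinarith [neg_abs_le (corrected a C n), abs_nonneg (corrected a C n),
        div_nonneg (Nat.cast_nonneg m) hn0.le]
    linarith [le_max_left D₀ 0]
  obtain ⟨k, hpm, hmp⟩ := exists_two_pow_mul_le_lt hn hnm
  set p := 2 ^ k * n with hp
  have hp1 : 1 ≤ p := Nat.one_le_iff_ne_zero.2 (by positivity)
  have hap : a p ≤ p / n * corrected a C n := by
    have hpn : (p : ℝ) / n = 2 ^ k := by rw [hp]; push_cast; field_simp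
    rw [hpn]
    exact (le_corrected hC hp1).trans (corrected_two_pow_mul_le hsub hn k)
  obtain ⟨r, rfl⟩ := Nat.exists_eq_add_of_le hpm
  rcases Nat.eq_zero_or_pos r with rfl | hr
  · simp only [add_zero] at hlogsq ⊢
    linarith
  have hsplit : ((p + r : ℕ) : ℝ) / n * corrected a C n
      = p / n * corrected a C n + r / n * corrected a C n := by push_cast; ring
  have hstep := hsub p r hp1 hr
  have hrec := ih r (by omega) hr
  have hlog : C / log 2 * log (2 * r) ^ 2 + 2 * C * log (p + r : ℕ)
      ≤ C / log 2 * log (2 * (p + r : ℕ)) ^ 2 :=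
    log_two_mul_sq_add_le hC (by norm_cast; omega) (by norm_cast; omega)
  have hlogp : C * log p ≤ C * log (p + r : ℕ) :=
    mul_le_mul_of_nonneg_left (log_le_log (by positivity) (by simp)) hC
  have hlogr : C * log r ≤ C * log (p + r : ℕ) :=
    mul_le_mul_of_nonneg_left (log_le_log (by positivity) (by simp)) hC
  linarith

theorem eventually_div_lt_of_corrected_div_lt (hC : 0 ≤ C) (hsub : IsLogSubadditive a C)
    {n : ℕ} (hn : 1 ≤ n) {c : ℝ} (hc : corrected a C n / n < c) :
    ∀ᶠ m : ℕ in atTop, a m / m < c := by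
  obtain ⟨D, hD⟩ := le_div_mul_corrected_add_log_sq hC hsub hn
  have herr : Tendsto (fun m : ℕ => D / m + C / log 2 * (log (2 * m) ^ 2 / m)) atTop (𝓝 0) := by
    simpa using (tendsto_const_div_atTop_nhds_zero_nat D).add
      ((tendsto_log_two_mul_pow_div_atTop 2).const_mul (C / log 2))
  filter_upwards [herr.eventually_lt_const (sub_pos.2 hc), eventually_ge_atTop 1] with m hm hm1
  have hm0 : (0 : ℝ) < m := by exact_mod_cast hm1
  have hsplit : (m / n * corrected a C n + D + C / log 2 * log (2 * m) ^ 2) / m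
      = corrected a C n / n + (D / m + C / log 2 * (log (2 * m) ^ 2 / m)) := by
    field_simp
    ring
  have := div_le_div_of_nonneg_right (hD m hm1) hm0.le
  linarith

theorem eventually_lt_div_of_lt_le_corrected_div {c c' : ℝ} (hcc' : c < c')
    (hc' : ∀ m : ℕ, 1 ≤ m → c' ≤ corrected a C m / m) :
    ∀ᶠ m : ℕ in atTop, c < a m / m := by
  have herr : Tendsto (fun m : ℕ => 2 * C * (log (2 * m) ^ 1 / m)) atTop (𝓝 0) := by
    simpa using (tendsto_log_two_mul_pow_div_atTop 1).const_mul (2 * C)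
  filter_upwards [herr.eventually_lt_const (sub_pos.2 hcc'), eventually_ge_atTop 1] with m hm hm1
  have hsplit : corrected a C m / m = a m / m + 2 * C * (log (2 * m) ^ 1 / m) := by
    unfold corrected
    ring
  linarith [hc' m hm1]

end LogFekete

open LogFekete

theorem stmt6_general (a : ℕ → ℝ) (C : ℝ) (hC : 0 ≤ C)
    (hsub : ∀ m n : ℕ, 1 ≤ m → 1 ≤ n →
      a (m + n) ≤ a m + a n + C * Real.log m + C * Real.log n) :
    ∃ L : EReal,
      Tendsto (fun n : ℕ => ((a n / n : ℝ) : EReal)) atTop (nhds L) ∧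
      (BddBelow {x : ℝ | ∃ n : ℕ, 1 ≤ n ∧ x = (a n + 2 * C * Real.log (2 * n)) / n} →
        L = ((sInf {x : ℝ | ∃ n : ℕ, 1 ≤ n ∧
          x = (a n + 2 * C * Real.log (2 * n)) / n} : ℝ) : EReal)) := by
  set S : Set ℝ := {x : ℝ | ∃ n : ℕ, 1 ≤ n ∧ x = (a n + 2 * C * Real.log (2 * n)) / n}
  have hupper : ∀ c : ℝ, (∃ x ∈ S, x < c) → ∀ᶠ m : ℕ in atTop, a m / m < c := by
    rintro c ⟨_, ⟨n, hn, rfl⟩, hc⟩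
    exact eventually_div_lt_of_corrected_div_lt hC hsub hn hc
  by_cases hbdd : BddBelow S
  · refine ⟨((sInf S : ℝ) : EReal), ?_, fun _ => rfl⟩
    rw [EReal.tendsto_coe, tendsto_order]
    exact ⟨fun c hc => eventually_lt_div_of_lt_le_corrected_div hc
        fun m hm => csInf_le hbdd ⟨m, hm, rfl⟩,
      fun c hc => hupper c (exists_lt_of_csInf_lt ⟨_, 1, le_rfl, rfl⟩ hc)⟩
  · refine ⟨⊥, EReal.tendsto_nhds_bot_iff_real.2 fun x => ?_, fun h => absurd h hbdd⟩
    exact (hupper x (not_bddBelow_iff.1 hbdd x)).mono fun m h => by exact_mod_cast h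

/-- Fekete's lemma with logarithmic error terms: if
`a (m+n) ≤ a m + a n + C log m + C log n` for all `m, n ≥ 1` with `C ≥ 0`, and
`sup_n a n / n < +∞`, then `(a n / n)` converges in `ℝ ∪ {-∞}`, with limit
`inf_{n ≥ 1} (a n + 2C log (2n)) / n` when that infimum is finite. -/
theorem stmt6 (a : ℕ → ℝ) (C : ℝ) (hC : 0 ≤ C)
    (hsub : ∀ m n : ℕ, 1 ≤ m → 1 ≤ n →
      a (m + n) ≤ a m + a n + C * Real.log m + C * Real.log n)
    (hbd : ∃ M : ℝ, ∀ n : ℕ, 1 ≤ n → a n / n ≤ M) :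
    ∃ L : EReal,
      Tendsto (fun n : ℕ => ((a n / n : ℝ) : EReal)) atTop (nhds L) ∧
      (BddBelow {x : ℝ | ∃ n : ℕ, 1 ≤ n ∧ x = (a n + 2 * C * Real.log (2 * n)) / n} →
        L = ((sInf {x : ℝ | ∃ n : ℕ, 1 ≤ n ∧
          x = (a n + 2 * C * Real.log (2 * n)) / n} : ℝ) : EReal)) :=
  stmt6_general a C hC hsub
end

section
/- Let $E_\bullet$ be a filtrated approximable graded $K$-algebra with limit measure $\nu_{E_\bullet} = \lim_{n\to\infty} T_{1/n}(\nu_{E_n})$ (weak limit) and $\lambda_{\max}^{\mathrm{asy}}(E_\bullet) = \lim_{n\to\infty} \lambda_{\max}(E_n)/n$. Define $\lambda_+^{\mathrm{asy}}(E_\bullet) = \int_0^{+\infty} x\, \nu_{E_\bullet}(dx)$. Then $\lambda_+^{\mathrm{asy}}(E_\bullet) > 0$ if and only if $\lambda_{\max}^{\mathrm{asy}}(E_\bullet) > 0$. -/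
open Filter MeasureTheory
open Module Submodule Pointwise

open Filter

lemma stmt9_nat_growth (d : ℕ → ℕ) (r G n₂ : ℕ) (hG : 1 ≤ G)
    (h1 : ∀ n, n₂ ≤ n → 1 ≤ d n) (h2 : ∀ n, n₂ ≤ n → d n ≤ 2 * (n + 1) ^ r) :
    ∀ n₃ : ℕ, ∃ n, n₃ ≤ n ∧ n₂ ≤ n ∧ d (2 ^ G * n) ≤ 2 ^ (G * (r + 2)) * d n := by
  intro n₃
  by_contra hcon
  push_neg at hcon
  have hn₃ : ∀ n, n₃ ≤ n → n₂ ≤ n → 2 ^ (G * (r + 2)) * d n < d (2 ^ G * n) := by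
    intro n h3 h2'
    exact hcon n h3 h2'
  obtain ⟨n₀, hn₀⟩ : ∃ n₀, n₀ = n₂ + n₃ + 1 := ⟨_, rfl⟩
  have hn₀2 : n₂ ≤ n₀ := by omega
  have hn₀3 : n₃ ≤ n₀ := by omega
  have key : ∀ k, 2 ^ (G * (r + 2) * k) ≤ d (2 ^ (G * k) * n₀) := by
    intro k
    induction k with
    | zero => simpa using h1 n₀ hn₀2
    | succ k ih =>
      have hpos : 0 < (2:ℕ) ^ (G * k) := Nat.pow_pos (by norm_num)
      have hnk : n₀ ≤ 2 ^ (G * k) * n₀ := Nat.le_mul_of_pos_left n₀ hpos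
      have hstep := hn₃ (2 ^ (G * k) * n₀) (le_trans hn₀3 hnk) (le_trans hn₀2 hnk)
      have he : (2:ℕ) ^ G * (2 ^ (G * k) * n₀) = 2 ^ (G * (k + 1)) * n₀ := by
        rw [← mul_assoc, ← pow_add]
        congr 2
        ring
      rw [he] at hstep
      calc 2 ^ (G * (r + 2) * (k + 1)) = 2 ^ (G * (r + 2)) * 2 ^ (G * (r + 2) * k) := by
            rw [← pow_add]; congr 1; ring
        _ ≤ 2 ^ (G * (r + 2)) * d (2 ^ (G * k) * n₀) := Nat.mul_le_mul_left _ ih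
        _ ≤ d (2 ^ (G * (k + 1)) * n₀) := le_of_lt hstep
  have bound : ∀ k, G * (r + 2) * k ≤ 1 + G * k * r + (n₀ + 1) * r := by
    intro k
    have hpos : 0 < (2:ℕ) ^ (G * k) := Nat.pow_pos (by norm_num)
    have hnk : n₂ ≤ 2 ^ (G * k) * n₀ := le_trans hn₀2 (Nat.le_mul_of_pos_left n₀ hpos)
    have hb1 : d (2 ^ (G * k) * n₀) ≤ 2 * (2 ^ (G * k) * n₀ + 1) ^ r := h2 _ hnk
    have hb2 : (2 ^ (G * k) * n₀ + 1) ≤ 2 ^ (G * k) * (n₀ + 1) := by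
      have : 1 ≤ (2:ℕ) ^ (G * k) := hpos
      nlinarith
    have hb3 : (n₀ + 1 : ℕ) ≤ 2 ^ (n₀ + 1) := le_of_lt (Nat.lt_two_pow_self)
    have hb4 : d (2 ^ (G * k) * n₀) ≤ 2 ^ (1 + G * k * r + (n₀ + 1) * r) := by
      calc d (2 ^ (G * k) * n₀) ≤ 2 * (2 ^ (G * k) * n₀ + 1) ^ r := hb1
        _ ≤ 2 * (2 ^ (G * k) * (n₀ + 1)) ^ r :=
            Nat.mul_le_mul_left _ (Nat.pow_le_pow_left hb2 r)
        _ ≤ 2 * (2 ^ (G * k) * 2 ^ (n₀ + 1)) ^ r :=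
            Nat.mul_le_mul_left _ (Nat.pow_le_pow_left (Nat.mul_le_mul_left _ hb3) r)
        _ = 2 ^ (1 + G * k * r + (n₀ + 1) * r) := by
            rw [← pow_add, ← pow_mul, ← pow_succ']
            congr 1
            ring
    have := le_trans (key k) hb4
    exact (Nat.pow_le_pow_iff_right (by norm_num)).mp this
  -- contradiction with k large
  obtain ⟨k, hk⟩ : ∃ k, k = (n₀ + 1) * r + 1 := ⟨_, rfl⟩
  have hbk := bound k
  have e1 : G * (r + 2) * k = G * k * r + 2 * (G * k) := by ring
  rw [e1] at hbk
  have e2 : k ≤ G * k := Nat.le_mul_of_pos_left k (by omega)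
  omega



lemma stmt9_finrank_pow_le {K A : Type*} [Field K] [CommRing A] [Algebra K A]
    (W : Submodule K A) [FiniteDimensional K W] (n : ℕ) :
    Module.finrank K ((W ^ n : Submodule K A)) ≤ (n + 1) ^ (Module.finrank K W) := by
  classical
  set r := Module.finrank K W with hr
  let B := Module.finBasis K W
  let v : Fin r → A := fun i => ((B i : W) : A)
  have hWspan : W = Submodule.span K (Set.range v) := by
    have h1 : Set.range v = W.subtype '' Set.range (B : Fin r → W) := by
      rw [← Set.range_comp]; rfl
    rw [h1, ← Submodule.map_span, B.span_eq, Submodule.map_subtype_top]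
  let mon : (Fin r → Fin (n + 1)) → A := fun α => ∏ j, v j ^ (α j : ℕ)
  let Tf : Finset A := Finset.image mon Finset.univ
  have hsub : (Set.range v) ^ n ⊆ (Tf : Set A) := by
    intro a ha
    rw [Set.mem_pow] at ha
    obtain ⟨f, hf⟩ := ha
    choose g hg using fun i => (f i).2
    have ha' : ∏ i : Fin n, v (g i) = a := by
      rw [← hf, List.prod_ofFn]
      exact Finset.prod_congr rfl fun i _ => hg i
    have hcol : ∏ i : Fin n, v (g i)
        = ∏ j ∈ Finset.univ.image g, v j ^ (Finset.univ.filter (fun i => g i = j)).card := by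
      exact Finset.prod_comp v g
    have hext : ∏ j ∈ Finset.univ.image g, v j ^ (Finset.univ.filter (fun i => g i = j)).card
        = ∏ j : Fin r, v j ^ (Finset.univ.filter (fun i => g i = j)).card := by
      refine Finset.prod_subset (Finset.subset_univ _) ?_
      intro j _ hj
      have : (Finset.univ.filter (fun i => g i = j)) = ∅ := by
        ext i
        simp only [Finset.mem_filter, Finset.mem_univ, true_and, Finset.notMem_empty,
          iff_false]
        intro h
        exact hj (Finset.mem_image.mpr ⟨i, Finset.mem_univ i, h⟩)
      rw [this]
      simp
    have hcard : ∀ j : Fin r, (Finset.univ.filter (fun i => g i = j)).card < n + 1 := by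
      intro j
      exact Nat.lt_succ_of_le (le_trans (Finset.card_filter_le _ _) (by simp))
    refine Finset.mem_coe.mpr (Finset.mem_image.mpr ⟨fun j => ⟨_, hcard j⟩, Finset.mem_univ _, ?_⟩)
    show ∏ j : Fin r, v j ^ ((Finset.univ.filter (fun i => g i = j)).card) = a
    rw [← hext, ← hcol, ha']
  have hWn : (W ^ n : Submodule K A) = Submodule.span K ((Set.range v) ^ n) := by
    conv_lhs => rw [hWspan]
    exact Submodule.span_pow _ n
  have hle : (W ^ n : Submodule K A) ≤ Submodule.span K (Tf : Set A) := by
    rw [hWn]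
    exact Submodule.span_mono hsub
  haveI : FiniteDimensional K (Submodule.span K (Tf : Set A)) :=
    FiniteDimensional.span_finset K Tf
  calc Module.finrank K (W ^ n : Submodule K A)
      ≤ Module.finrank K (Submodule.span K (Tf : Set A)) := Submodule.finrank_mono hle
    _ ≤ Tf.card := finrank_span_finset_le_card Tf
    _ ≤ (n + 1) ^ r := by
        refine le_trans Finset.card_image_le ?_
        simp [Fintype.card_fun]

set_option maxHeartbeats 2000000 in
/-- For a filtrated approximable graded `K`-algebra with limit measure
`ν = lim T_{1/n}(ν_{Eₙ})` (weak limit) and `λ_max^asy = lim λ_max(Eₙ)/n`, one has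
`λ₊^asy = ∫_0^∞ x dν > 0` if and only if `λ_max^asy > 0`. -/
theorem stmt9 (K A : Type*) [Field K] [CommRing A] [Algebra K A]
    (ℰ : ℕ → Submodule K A)
    (hgr : ∀ m n : ℕ, ∀ x ∈ ℰ m, ∀ y ∈ ℰ n, x * y ∈ ℰ (m + n))
    (hfd : ∀ D : ℕ, FiniteDimensional K (ℰ D))
    (hnz : ∃ N : ℕ, ∀ n : ℕ, N ≤ n → ℰ n ≠ ⊥)
    (happrox : ∀ ε : ℝ, 0 < ε → ε < 1 → ∃ p₀ : ℕ, ∀ p : ℕ, p₀ ≤ p →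
      1 - ε < liminf (fun n : ℕ =>
        (Module.finrank K ((ℰ p) ^ n : Submodule K A) : ℝ)
          / (Module.finrank K (ℰ (n * p)) : ℝ)) atTop)
    (F : ℕ → ℝ → Submodule K A)
    (hFsub : ∀ (D : ℕ) (t : ℝ), F D t ≤ ℰ D)
    (hdec : ∀ (D : ℕ) (s t : ℝ), t ≤ s → F D s ≤ F D t)
    (hFtop : ∀ D : ℕ, ∃ t₀ : ℝ, ∀ t : ℝ, t ≤ t₀ → F D t = ℰ D)
    (hFbot : ∀ D : ℕ, ∃ t₁ : ℝ, ∀ t : ℝ, t₁ ≤ t → F D t = ⊥)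
    (hFleft : ∀ (D : ℕ) (t : ℝ), F D t = ⨅ (s : ℝ) (_ : s < t), F D s)
    (lam : ℕ → A → ℝ)
    (hlamdef : ∀ (D : ℕ) (x : A), lam D x = sSup {t : ℝ | x ∈ F D t})
    (hfilt : ∀ m n : ℕ, ∀ x ∈ ℰ m, ∀ y ∈ ℰ n, x ≠ 0 → y ≠ 0 →
      lam m x + lam n y ≤ lam (m + n) (x * y))
    (lamMax : ℕ → ℝ)
    (hlamMax : ∀ n : ℕ, lamMax n = sSup {r : ℝ | ∃ x ∈ ℰ n, x ≠ 0 ∧ r = lam n x})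
    (hsup : ∃ M : ℝ, ∀ n : ℕ, 1 ≤ n → lamMax n / n ≤ M)
    (μ : ℕ → Measure ℝ)
    (hμprob : ∀ n : ℕ, ℰ n ≠ ⊥ → IsProbabilityMeasure (μ n))
    (hμ : ∀ n : ℕ, ℰ n ≠ ⊥ → ∀ t : ℝ, μ n (Set.Ici t)
      = (Module.finrank K (F n t) : ENNReal) / (Module.finrank K (ℰ n) : ENNReal))
    (ν : Measure ℝ) (hνprob : IsProbabilityMeasure ν)
    (hweak : ∀ f : BoundedContinuousFunction ℝ ℝ,
      Tendsto (fun n : ℕ =>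
        ∫ x, f x ∂(Measure.map (fun x : ℝ => x / n) (μ n))) atTop
        (nhds (∫ x, f x ∂ν)))
    (L : ℝ) (hL : Tendsto (fun n : ℕ => lamMax n / n) atTop (nhds L)) :
    0 < ∫ x in Set.Ioi (0 : ℝ), x ∂ν ↔ 0 < L := by
  classical
  obtain ⟨N, hN⟩ := hnz
  obtain ⟨M₀, hM₀⟩ := hsup
  -- `lam` of zero is zero (junk value of `sSup`)
  have lam_zero : ∀ D : ℕ, lam D 0 = 0 := by
    intro D
    rw [hlamdef]
    have h1 : {t : ℝ | (0 : A) ∈ F D t} = Set.univ :=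
      Set.eq_univ_of_forall fun t => (F D t).zero_mem
    rw [h1]
    exact Real.sSup_of_not_bddAbove not_bddAbove_univ
  -- membership characterization of the filtration
  have mem_F_iff : ∀ (D : ℕ) (x : A), x ∈ ℰ D → x ≠ 0 → ∀ t : ℝ,
      (x ∈ F D t ↔ t ≤ lam D x) := by
    intro D x hxE hx t
    obtain ⟨t₀, ht₀⟩ := hFtop D
    obtain ⟨t₁, ht₁⟩ := hFbot D
    have hne : Set.Nonempty {s : ℝ | x ∈ F D s} :=
      ⟨t₀, by rw [Set.mem_setOf_eq, ht₀ t₀ le_rfl]; exact hxE⟩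
    have hub : ∀ u ∈ {s : ℝ | x ∈ F D s}, u ≤ t₁ := by
      intro u hu
      by_contra hlt
      push_neg at hlt
      rw [Set.mem_setOf_eq, ht₁ u (le_of_lt hlt)] at hu
      exact hx ((Submodule.mem_bot K).mp hu)
    have hbdd : BddAbove {s : ℝ | x ∈ F D s} := ⟨t₁, hub⟩
    constructor
    · intro hxt
      rw [hlamdef]
      exact le_csSup hbdd hxt
    · intro hts
      rw [hFleft D t]
      refine (Submodule.mem_iInf _).mpr fun s => (Submodule.mem_iInf _).mpr fun hst => ?_
      have hslt : s < sSup {u : ℝ | x ∈ F D u} := by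
        rw [← hlamdef]; exact lt_of_lt_of_le hst hts
      obtain ⟨u, huS, hsu⟩ := exists_lt_of_lt_csSup hne hslt
      exact hdec D u s (le_of_lt hsu) huS
  -- `lamMax` bounds
  have lamMax_bdd : ∀ n : ℕ, BddAbove {r : ℝ | ∃ x ∈ ℰ n, x ≠ 0 ∧ r = lam n x} := by
    intro n
    obtain ⟨t₁, ht₁⟩ := hFbot n
    refine ⟨t₁, ?_⟩
    rintro ρ ⟨x, hxE, hx, rfl⟩
    have hx1 : x ∈ F n (lam n x) := (mem_F_iff n x hxE hx _).mpr le_rfl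
    by_contra hlt
    push_neg at hlt
    rw [ht₁ _ (le_of_lt hlt)] at hx1
    exact hx ((Submodule.mem_bot K).mp hx1)
  have lam_le_lamMax : ∀ (n : ℕ) (x : A), x ∈ ℰ n → x ≠ 0 → lam n x ≤ lamMax n := by
    intro n x hxE hx
    rw [hlamMax]
    exact le_csSup (lamMax_bdd n) ⟨x, hxE, hx, rfl⟩
  have F_eq_bot : ∀ (n : ℕ) (t : ℝ), lamMax n < t → F n t = ⊥ := by
    intro n t h
    by_contra hne
    obtain ⟨x, hxF, hx⟩ := (Submodule.ne_bot_iff _).mp hne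
    have h1 : t ≤ lam n x := (mem_F_iff n x (hFsub n t hxF) hx t).mp hxF
    have h2 : lam n x ≤ lamMax n := lam_le_lamMax n x (hFsub n t hxF) hx
    linarith
  -- powers
  have pow_mem : ∀ (x : A) (p : ℕ), x ∈ ℰ p → ∀ j : ℕ, 1 ≤ j → x ^ j ∈ ℰ (j * p) := by
    intro x p hx j hj
    induction j with
    | zero => omega
    | succ j ih =>
      by_cases hj0 : j = 0
      · subst hj0; simpa using hx
      · have hmem := ih (by omega)
        have := hgr (j * p) p (x ^ j) hmem x hx
        have hdeg : j * p + p = (j + 1) * p := (Nat.succ_mul j p).symm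
        rw [hdeg, ← pow_succ] at this
        exact this
  have pow_lam : ∀ (p : ℕ) (x : A), x ∈ ℰ p → x ≠ 0 → 0 < lam p x →
      ∀ j : ℕ, 1 ≤ j → x ^ j ≠ 0 ∧ (j : ℝ) * lam p x ≤ lam (j * p) (x ^ j) := by
    intro p x hxE hx hpos j hj
    induction j with
    | zero => omega
    | succ j ih =>
      by_cases hj0 : j = 0
      · subst hj0
        constructor
        · simpa using hx
        · simp
      · have hj1 : 1 ≤ j := by omega
        obtain ⟨hxj, hlamj⟩ := ih hj1
        have hmem := pow_mem x p hxE j hj1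
        have hfil := hfilt (j * p) p (x ^ j) hmem x hxE hxj hx
        have hdeg : j * p + p = (j + 1) * p := (Nat.succ_mul j p).symm
        rw [hdeg, ← pow_succ] at hfil
        have hge : ((j : ℝ) + 1) * lam p x ≤ lam ((j + 1) * p) (x ^ (j + 1)) := by
          nlinarith
        have hne0 : x ^ (j + 1) ≠ 0 := by
          intro h0
          rw [h0, lam_zero] at hge
          nlinarith
        refine ⟨hne0, ?_⟩
        push_cast
        linarith
  -- transfer of dimensions by multiplication
  have transfer : ∀ (q m : ℕ) (z : A), z ∈ ℰ q → z ≠ 0 → ∀ b s : ℝ, b ≤ lam q z → -b < s →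
      Module.finrank K (F m s) ≤ Module.finrank K (F (m + q) (s + b)) := by
    intro q m z hzE hz b s hb hs
    haveI := hfd (m + q)
    haveI : FiniteDimensional K (F (m + q) (s + b)) :=
      Submodule.finiteDimensional_of_le (hFsub (m + q) (s + b))
    have hmap : ∀ y : A, y ∈ F m s → z * y ∈ F (m + q) (s + b) := by
      intro y hy
      by_cases hy0 : y = 0
      · rw [hy0, mul_zero]; exact Submodule.zero_mem _
      · have hyE : y ∈ ℰ m := hFsub m s hy
        have hys : s ≤ lam m y := (mem_F_iff m y hyE hy0 s).mp hy
        have hmul := hfilt q m z hzE y hyE hz hy0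
        rw [add_comm q m] at hmul
        have hzy : z * y ≠ 0 := by
          intro h0
          rw [h0, lam_zero] at hmul
          linarith
        have hmem : z * y ∈ ℰ (m + q) := by
          rw [add_comm]; exact hgr q m z hzE y hyE
        exact (mem_F_iff (m + q) (z * y) hmem hzy (s + b)).mpr (by linarith)
    let g : (F m s) →ₗ[K] A := (LinearMap.mulLeft K z).comp (F m s).subtype
    have hgval : ∀ y : F m s, g y = z * (y : A) := fun y => rfl
    have hgmem : ∀ y : F m s, g y ∈ F (m + q) (s + b) := fun y => hmap y.1 y.2
    have hginj : Function.Injective g := by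
      rw [← LinearMap.ker_eq_bot]
      rw [Submodule.eq_bot_iff]
      intro y hy
      rw [LinearMap.mem_ker, hgval] at hy
      by_contra h0
      have hyv : (y : A) ≠ 0 := fun h => h0 (Subtype.ext h)
      have hyE : (y : A) ∈ ℰ m := hFsub m s y.2
      have hys : s ≤ lam m (y : A) := (mem_F_iff m (y : A) hyE hyv s).mp y.2
      have hmul := hfilt q m z hzE (y : A) hyE hz hyv
      rw [hy, lam_zero] at hmul
      linarith
    have hinj : Function.Injective (LinearMap.codRestrict (F (m + q) (s + b)) g hgmem) := by
      intro y₁ y₂ hyy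
      apply hginj
      have h' := congrArg (Subtype.val) hyy
      simpa [LinearMap.codRestrict_apply] using h'
    exact LinearMap.finrank_le_finrank_of_injective hinj
  -- positivity of dimensions
  have hfrpos : ∀ n : ℕ, N ≤ n → 0 < Module.finrank K (ℰ n) := by
    intro n hn
    haveI := hfd n
    by_contra h
    push_neg at h
    have h0 : Module.finrank K (ℰ n) = 0 := by omega
    exact hN n hn (Submodule.finrank_eq_zero.mp h0)
  -- the rescaled measures as probability measures
  have measdiv : ∀ n : ℕ, Measurable fun x : ℝ => x / (n : ℝ) := fun n =>
    measurable_id.div_const _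
  set ν' : ProbabilityMeasure ℝ := ⟨ν, hνprob⟩ with hν'def
  let P : ℕ → ProbabilityMeasure ℝ := fun n =>
    if h : ℰ n = ⊥ then ν'
    else ⟨(μ n).map fun x : ℝ => x / (n : ℝ), by
      haveI := hμprob n h
      exact Measure.isProbabilityMeasure_map (measdiv n).aemeasurable⟩
  have hPeq : ∀ n : ℕ, ℰ n ≠ ⊥ →
      (P n : Measure ℝ) = (μ n).map fun x : ℝ => x / (n : ℝ) := by
    intro n h
    have hP : P n = (⟨(μ n).map fun x : ℝ => x / (n : ℝ), by
        haveI := hμprob n h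
        exact Measure.isProbabilityMeasure_map (measdiv n).aemeasurable⟩ : ProbabilityMeasure ℝ) :=
      dif_neg h
    rw [hP]
    rfl
  have hPtend : Tendsto P atTop (nhds ν') := by
    rw [ProbabilityMeasure.tendsto_iff_forall_integral_tendsto]
    intro f
    refine (hweak f).congr' ?_
    filter_upwards [eventually_ge_atTop N] with n hn
    rw [hPeq n (hN n hn)]
  have hopen : ∀ {G : Set ℝ}, IsOpen G →
      ν G ≤ liminf (fun n => (P n : Measure ℝ) G) atTop := by
    intro G hG
    exact ProbabilityMeasure.le_liminf_measure_open_of_tendsto hPtend hG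
  have hclosed : ∀ {C : Set ℝ}, IsClosed C →
      limsup (fun n => (P n : Measure ℝ) C) atTop ≤ ν C := by
    intro C hC
    exact ProbabilityMeasure.limsup_measure_closed_le_of_tendsto hPtend hC
  -- explicit values of the rescaled measures
  have hmapIci : ∀ n : ℕ, 1 ≤ n → ℰ n ≠ ⊥ → ∀ c : ℝ,
      (P n : Measure ℝ) (Set.Ici c) = μ n (Set.Ici (c * n)) := by
    intro n hn h c
    rw [hPeq n h, Measure.map_apply (measdiv n) measurableSet_Ici]
    congr 1
    ext x
    have hn0 : (0 : ℝ) < n := by exact_mod_cast hn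
    simp [Set.mem_preimage, Set.mem_Ici, le_div_iff₀ hn0]
  have hmapIoi : ∀ n : ℕ, 1 ≤ n → ℰ n ≠ ⊥ → ∀ c : ℝ,
      (P n : Measure ℝ) (Set.Ioi c) = μ n (Set.Ioi (c * n)) := by
    intro n hn h c
    rw [hPeq n h, Measure.map_apply (measdiv n) measurableSet_Ioi]
    congr 1
    ext x
    have hn0 : (0 : ℝ) < n := by exact_mod_cast hn
    simp [Set.mem_preimage, Set.mem_Ioi, lt_div_iff₀ hn0]
  -- ENNReal conversion helpers
  have ennconv : ∀ a b : ℕ, 0 < b → (1/2 : ENNReal) < (a : ENNReal) / (b : ENNReal) →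
      b < 2 * a := by
    intro a b hb h
    have hbne : (b : ENNReal) ≠ 0 := by exact_mod_cast Nat.pos_iff_ne_zero.mp hb
    have hfin : (a : ENNReal) / (b : ENNReal) ≠ ⊤ := by
      simp [ENNReal.div_eq_top, hbne, ENNReal.natCast_ne_top]
    have h2 : ((1:ENNReal)/2).toReal < ((a : ENNReal) / (b : ENNReal)).toReal :=
      (ENNReal.toReal_lt_toReal (by norm_num) hfin).mpr h
    rw [ENNReal.toReal_div, ENNReal.toReal_div, ENNReal.toReal_natCast, ENNReal.toReal_natCast,
      ENNReal.toReal_one, ENNReal.toReal_ofNat] at h2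
    have hb0 : (0 : ℝ) < (b : ℝ) := by exact_mod_cast hb
    rw [div_lt_div_iff₀ (by norm_num) hb0] at h2
    exact_mod_cast (by nlinarith : (b : ℝ) < 2 * a)
  have ennconv2 : ∀ a b E : ℕ, 0 < b → b ≤ 2 ^ E * a →
      ((2 : ENNReal) ^ E)⁻¹ ≤ (a : ENNReal) / (b : ENNReal) := by
    intro a b E hb hle
    have hbne : (b : ENNReal) ≠ 0 := by exact_mod_cast Nat.pos_iff_ne_zero.mp hb
    rw [ENNReal.le_div_iff_mul_le (Or.inl hbne) (Or.inl (ENNReal.natCast_ne_top b))]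
    have h1 : ((2 : ENNReal) ^ E)⁻¹ * b ≤ ((2 : ENNReal) ^ E)⁻¹ * ((2:ENNReal) ^ E * a) := by
      apply mul_le_mul_right
      exact_mod_cast (by exact_mod_cast hle : (b : ENNReal) ≤ ((2 ^ E * a : ℕ) : ENNReal))
    refine le_trans h1 ?_
    rw [← mul_assoc, ENNReal.inv_mul_cancel (by positivity) (by simp [ENNReal.pow_ne_top])]
    simp
  constructor
  · -- integral positive → L positive
    intro hpos
    have hν0 : 0 < ν (Set.Ioi (0:ℝ)) := by
      by_contra h
      push_neg at h
      have h0 : ν (Set.Ioi (0:ℝ)) = 0 := le_antisymm h zero_le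
      have hres : ν.restrict (Set.Ioi (0:ℝ)) = 0 := Measure.restrict_eq_zero.mpr h0
      rw [hres] at hpos
      simp at hpos
    obtain ⟨δ, hδ0, hδ⟩ : ∃ δ : ℝ, 0 < δ ∧ 0 < ν (Set.Ioi δ) := by
      by_contra hco
      push_neg at hco
      have hz : ∀ k : ℕ, ν (Set.Ioi (1/((k:ℝ)+1))) = 0 := fun k =>
        le_antisymm (hco _ (by positivity)) zero_le
      have hcov : Set.Ioi (0:ℝ) ⊆ ⋃ k : ℕ, Set.Ioi (1/((k:ℝ)+1)) := by
        intro y hy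
        obtain ⟨k, hk⟩ := exists_nat_one_div_lt (Set.mem_Ioi.mp hy)
        exact Set.mem_iUnion.mpr ⟨k, hk⟩
      have hcontr := measure_mono_null hcov (measure_iUnion_null hz)
      exact absurd hcontr (ne_of_gt hν0)
    have h1 : ν (Set.Ioi δ) ≤ liminf (fun n => (P n : Measure ℝ) (Set.Ioi δ)) atTop :=
      hopen isOpen_Ioi
    have h2 : ∀ᶠ n : ℕ in atTop, 0 < (P n : Measure ℝ) (Set.Ioi δ) :=
      eventually_lt_of_lt_liminf (lt_of_lt_of_le hδ h1)
    have h3 : ∀ᶠ n : ℕ in atTop, δ ≤ lamMax n / n := by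
      filter_upwards [h2, eventually_ge_atTop (max N 1)] with n hn hnN
      have hn1 : 1 ≤ n := le_trans (le_max_right _ _) hnN
      have hnN' : N ≤ n := le_trans (le_max_left _ _) hnN
      have hbot := hN n hnN'
      rw [hmapIoi n hn1 hbot δ] at hn
      have hn' : 0 < μ n (Set.Ici (δ * n)) :=
        lt_of_lt_of_le hn (measure_mono Set.Ioi_subset_Ici_self)
      rw [hμ n hbot] at hn'
      have hF0 : Module.finrank K (F n (δ * n)) ≠ 0 := by
        intro h0
        rw [h0] at hn'
        simp at hn'
      have hFne : F n (δ * n) ≠ ⊥ := by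
        intro h0
        rw [h0, finrank_bot] at hF0
        simp at hF0
      obtain ⟨y, hyF, hy0⟩ := (Submodule.ne_bot_iff _).mp hFne
      have hylam : δ * n ≤ lam n y := (mem_F_iff n y (hFsub n _ hyF) hy0 _).mp hyF
      have hymax : lam n y ≤ lamMax n := lam_le_lamMax n y (hFsub n _ hyF) hy0
      have hn0 : (0:ℝ) < n := by exact_mod_cast hn1
      rw [le_div_iff₀ hn0]
      linarith
    have hfin := ge_of_tendsto hL h3
    linarith
  · intro hLpos
    -- choose T with ν (Ioi (-T)) > 1/2
    obtain ⟨T, hT⟩ : ∃ T : ℕ, (1/2 : ENNReal) < ν (Set.Ioi (-(T:ℝ))) := by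
      have hdir : Directed (· ⊆ ·) (fun k : ℕ => Set.Ioi (-(k:ℝ))) := by
        apply Monotone.directed_le
        intro i j hij
        apply Set.Ioi_subset_Ioi
        have : (i:ℝ) ≤ j := by exact_mod_cast hij
        linarith
      have hun : (⋃ k : ℕ, Set.Ioi (-(k:ℝ))) = Set.univ := by
        ext y
        simp only [Set.mem_iUnion, Set.mem_Ioi, Set.mem_univ, iff_true]
        obtain ⟨k, hk⟩ := exists_nat_gt (-y)
        exact ⟨k, by linarith⟩
      have hsup2 := Directed.measure_iUnion (μ := ν) hdir
      rw [hun, measure_univ] at hsup2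
      have h1 : (1/2 : ENNReal) < ⨆ k : ℕ, ν (Set.Ioi (-(k:ℝ))) := by
        rw [← hsup2]
        norm_num
      exact lt_iSup_iff.mp h1
    -- eventual mass above -T·m for the unscaled measures
    have hmassev : ∀ᶠ m : ℕ in atTop, (1/2 : ENNReal) < (P m : Measure ℝ) (Set.Ioi (-(T:ℝ))) :=
      eventually_lt_of_lt_liminf (lt_of_lt_of_le hT (hopen isOpen_Ioi))
    obtain ⟨m₁, hm₁⟩ := eventually_atTop.mp (hmassev.and (eventually_ge_atTop (max N 1)))
    -- choose p
    obtain ⟨p₀, hp₀⟩ := happrox (1/2) (by norm_num) (by norm_num)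
    have hlamev : ∀ᶠ q : ℕ in atTop, L / 2 < lamMax q / q :=
      hL.eventually (eventually_gt_nhds (by linarith))
    obtain ⟨p, hpl, hpge⟩ := (hlamev.and (eventually_ge_atTop (max (max p₀ 1) N))).exists
    have hp1 : 1 ≤ p := le_trans (le_trans (le_max_right p₀ 1) (le_max_left _ N)) hpge
    have hppo : p₀ ≤ p := le_trans (le_trans (le_max_left p₀ 1) (le_max_left _ N)) hpge
    have hpN : N ≤ p := le_trans (le_max_right _ N) hpge
    have hppos : (0:ℝ) < p := by exact_mod_cast hp1
    have hlamMaxp : L * p / 2 < lamMax p := by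
      rw [div_lt_div_iff₀ (by norm_num) hppos] at hpl
      linarith
    set a : ℝ := L * p / 4 with ha_def
    have hapos : 0 < a := by positivity
    have haless : a < lamMax p := by
      have : L * p / 4 < L * p / 2 := by
        have : 0 < L * p := by positivity
        linarith
      linarith
    -- choose x with a < lam p x
    have hSne : {r : ℝ | ∃ x ∈ ℰ p, x ≠ 0 ∧ r = lam p x}.Nonempty := by
      by_contra hco
      rw [Set.not_nonempty_iff_eq_empty] at hco
      have h0 : lamMax p = 0 := by rw [hlamMax p, hco, Real.sSup_empty]
      rw [h0] at haless
      linarith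
    obtain ⟨ρ, hρ, haρ⟩ := exists_lt_of_lt_csSup hSne
      (by rw [← hlamMax p]; exact haless)
    obtain ⟨x, hxE, hxne, rfl⟩ := hρ
    have hlampos : 0 < lam p x := lt_trans hapos haρ
    -- choose G
    obtain ⟨G, hG1, hGbig⟩ : ∃ G : ℕ, 1 ≤ G ∧ (T:ℝ) * p / a + 2 ≤ (2:ℝ)^G := by
      obtain ⟨G, hG⟩ := pow_unbounded_of_one_lt ((T:ℝ) * p / a + 2) (by norm_num : (1:ℝ) < 2)
      exact ⟨max G 1, le_max_right _ _,
        le_trans (le_of_lt hG) (pow_le_pow_right₀ (by norm_num) (le_max_left _ _))⟩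
    -- dimension sequence
    set r : ℕ := Module.finrank K (ℰ p) with hrdef
    set d : ℕ → ℕ := fun n => Module.finrank K (ℰ (n * p)) with hddef
    have hbd : IsBoundedUnder (· ≥ ·) atTop (fun n : ℕ =>
        (Module.finrank K ((ℰ p) ^ n : Submodule K A) : ℝ)
          / (Module.finrank K (ℰ (n * p)) : ℝ)) :=
      isBoundedUnder_of ⟨0, fun n => div_nonneg (Nat.cast_nonneg _) (Nat.cast_nonneg _)⟩
    have hevratio : ∀ᶠ n : ℕ in atTop, (1 - 1/2 : ℝ) <
        (Module.finrank K ((ℰ p) ^ n : Submodule K A) : ℝ)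
          / (Module.finrank K (ℰ (n * p)) : ℝ) :=
      eventually_lt_of_lt_liminf (hp₀ p hppo) hbd
    have hd12 : ∀ᶠ n : ℕ in atTop, 1 ≤ d n ∧ d n ≤ 2 * (n+1)^r := by
      filter_upwards [hevratio, eventually_ge_atTop (max N 1)] with n hn hnN
      have hnN' : N ≤ n := le_trans (le_max_left _ _) hnN
      have hnp : N ≤ n * p := le_trans hnN' (Nat.le_mul_of_pos_right n (by omega))
      have hdn : 0 < d n := hfrpos (n * p) hnp
      refine ⟨hdn, ?_⟩
      have hdn0 : (0:ℝ) < (d n : ℝ) := by exact_mod_cast hdn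
      rw [show (1 - 1/2 : ℝ) = 1/2 by norm_num, lt_div_iff₀ hdn0] at hn
      haveI := hfd p
      have hfin : Module.finrank K ((ℰ p) ^ n : Submodule K A) ≤ (n+1)^r :=
        stmt9_finrank_pow_le (ℰ p) n
      have hlt : d n < 2 * Module.finrank K ((ℰ p) ^ n : Submodule K A) := by
        exact_mod_cast (by linarith : (d n : ℝ) < 2 * (Module.finrank K ((ℰ p) ^ n : Submodule K A) : ℝ))
      calc d n ≤ 2 * Module.finrank K ((ℰ p) ^ n : Submodule K A) := le_of_lt hlt
        _ ≤ 2 * (n+1)^r := Nat.mul_le_mul_left 2 hfin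
    obtain ⟨n₂, hn₂⟩ := eventually_atTop.mp hd12
    set Ebig : ℕ := G * (r + 2) + 1 with hEdef
    set c' : ℝ := a / ((2:ℝ)^G * p) with hc'def
    have hc'pos : 0 < c' := by positivity
    -- the main frequent lower bound
    have hfreq : ∃ᶠ k : ℕ in atTop, ((2 : ENNReal) ^ Ebig)⁻¹ ≤ (P k : Measure ℝ) (Set.Ici c') := by
      rw [frequently_atTop]
      intro k₀
      obtain ⟨n, hn3, hn2, hnd⟩ := stmt9_nat_growth d r G n₂ hG1
        (fun n hn => (hn₂ n hn).1) (fun n hn => (hn₂ n hn).2)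
        (max (max m₁ 1) (max N k₀))
      have hn1 : 1 ≤ n := le_trans (le_trans (le_max_right m₁ 1) (le_max_left _ _)) hn3
      have hnm₁ : m₁ ≤ n := le_trans (le_trans (le_max_left m₁ 1) (le_max_left _ _)) hn3
      have hnN : N ≤ n := le_trans (le_trans (le_max_left N k₀) (le_max_right _ _)) hn3
      have hnk₀ : k₀ ≤ n := le_trans (le_trans (le_max_right N k₀) (le_max_right _ _)) hn3
      -- degrees
      set m : ℕ := n * p with hmdef
      set Mdeg : ℕ := (2^G * n) * p with hMdef
      set j : ℕ := (2^G - 1) * n with hjdef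
      have h2G : 2 ≤ 2^G := by
        calc 2 = 2^1 := by norm_num
          _ ≤ 2^G := Nat.pow_le_pow_right (by norm_num) hG1
      have hj1 : 1 ≤ j := by
        have : 1 ≤ 2^G - 1 := by omega
        calc 1 = 1 * 1 := by norm_num
          _ ≤ (2^G - 1) * n := Nat.mul_le_mul this hn1
      have hdeg : m + j * p = Mdeg := by
        rw [hmdef, hjdef, hMdef]
        have h1 : n * p + (2^G - 1) * n * p = ((2^G - 1) + 1) * (n * p) := by ring
        rw [h1, Nat.sub_add_cancel (by omega : 1 ≤ 2^G)]
        ring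
      -- the power of x
      obtain ⟨hxj0, hxjlam⟩ := pow_lam p x hxE hxne hlampos j hj1
      have hxjmem : x ^ j ∈ ℰ (j * p) := pow_mem x p hxE j hj1
      -- real casts
      have hjcast : ((j:ℕ):ℝ) = ((2:ℝ)^G - 1) * n := by
        rw [hjdef]
        push_cast [Nat.cast_sub (by omega : 1 ≤ 2^G)]
        norm_num
      have hb_le : (j:ℝ) * a ≤ lam (j * p) (x ^ j) := by
        refine le_trans ?_ hxjlam
        have : (0:ℝ) ≤ (j:ℝ) := Nat.cast_nonneg j
        nlinarith [haρ]
      -- threshold arithmetic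
      have hNpos : (0:ℝ) < (n:ℝ) := by exact_mod_cast hn1
      have hkey : (T:ℝ) * m + (n:ℝ) * a ≤ (j:ℝ) * a := by
        rw [hjcast, hmdef]
        push_cast
        have h3 : (T:ℝ) * p / a * a = (T:ℝ) * p := div_mul_cancel₀ _ (ne_of_gt hapos)
        nlinarith [mul_le_mul_of_nonneg_right hGbig (le_of_lt hapos), hNpos, hapos]
      have hs_lt : -((j:ℝ) * a) < -(T:ℝ) * m := by nlinarith
      -- transfer the dimension bound
      have htrans := transfer (j * p) m (x ^ j) hxjmem hxj0 ((j:ℝ) * a)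
        (-(T:ℝ) * m) hb_le hs_lt
      rw [hdeg] at htrans
      -- mass at level m
      have hmild := hm₁ m (le_trans hnm₁ (Nat.le_mul_of_pos_right n (by omega)))
      obtain ⟨hmass, hmN⟩ := hmild
      have hm1' : 1 ≤ m := le_trans (le_max_right N 1) hmN
      have hmN' : N ≤ m := le_trans (le_max_left N 1) hmN
      have hmbot : ℰ m ≠ ⊥ := hN m hmN'
      rw [hmapIoi m hm1' hmbot (-(T:ℝ))] at hmass
      have hmass2 : (1/2 : ENNReal) < μ m (Set.Ici (-(T:ℝ) * m)) :=
        lt_of_lt_of_le hmass (measure_mono Set.Ioi_subset_Ici_self)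
      rw [hμ m hmbot] at hmass2
      have hEm_pos : 0 < Module.finrank K (ℰ m) := hfrpos m hmN'
      have hsource : Module.finrank K (ℰ m) < 2 * Module.finrank K (F m (-(T:ℝ) * m)) :=
        ennconv _ _ hEm_pos hmass2
      -- pass to threshold c' * Mdeg
      have hMcast : ((Mdeg:ℕ):ℝ) = (2:ℝ)^G * n * p := by
        rw [hMdef]; push_cast; ring
      have hthr : c' * (Mdeg:ℝ) ≤ -(T:ℝ) * m + (j:ℝ) * a := by
        have hc'M : c' * (Mdeg:ℝ) = (n:ℝ) * a := by
          rw [hc'def, hMcast]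
          field_simp
        rw [hc'M]
        linarith [hkey]
      haveI := hfd Mdeg
      haveI : FiniteDimensional K (F Mdeg (-(T:ℝ) * m + (j:ℝ) * a)) :=
        Submodule.finiteDimensional_of_le (hFsub Mdeg _)
      have hmono : Module.finrank K (F Mdeg (-(T:ℝ) * m + (j:ℝ) * a)) ≤
          Module.finrank K (F Mdeg (c' * (Mdeg:ℝ))) := by
        haveI : FiniteDimensional K (F Mdeg (c' * (Mdeg:ℝ))) :=
          Submodule.finiteDimensional_of_le (hFsub Mdeg _)
        exact Submodule.finrank_mono (hdec Mdeg _ _ hthr)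
      -- assemble the counting chain
      have hMd : Module.finrank K (ℰ Mdeg) = d (2^G * n) := by rw [hddef, hMdef]
      have hmd : Module.finrank K (ℰ m) = d n := by rw [hddef, hmdef]
      have hchain : Module.finrank K (ℰ Mdeg) ≤
          2 ^ Ebig * Module.finrank K (F Mdeg (c' * (Mdeg:ℝ))) := by
        rw [hMd, hEdef]
        calc d (2^G * n) ≤ 2^(G*(r+2)) * d n := hnd
          _ ≤ 2^(G*(r+2)) * (2 * Module.finrank K (F m (-(T:ℝ) * m))) := by
              rw [← hmd]; exact Nat.mul_le_mul_left _ (le_of_lt hsource)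
          _ = 2^(G*(r+2)+1) * Module.finrank K (F m (-(T:ℝ) * m)) := by ring
          _ ≤ 2^(G*(r+2)+1) * Module.finrank K (F Mdeg (c' * (Mdeg:ℝ))) :=
              Nat.mul_le_mul_left _ (le_trans htrans hmono)
      -- to the measure bound
      have hMN : N ≤ Mdeg := by
        calc N ≤ n := hnN
          _ ≤ (2^G * n) * p := by
              calc n ≤ 2^G * n := Nat.le_mul_of_pos_left n (by positivity)
                _ ≤ (2^G * n) * p := Nat.le_mul_of_pos_right _ (by omega)
      have hMbot : ℰ Mdeg ≠ ⊥ := hN Mdeg hMN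
      have hM1 : 1 ≤ Mdeg := by
        calc 1 ≤ n := hn1
          _ ≤ Mdeg := by
              calc n ≤ 2^G * n := Nat.le_mul_of_pos_left n (by positivity)
                _ ≤ (2^G * n) * p := Nat.le_mul_of_pos_right _ (by omega)
      have hEM_pos : 0 < Module.finrank K (ℰ Mdeg) := hfrpos Mdeg hMN
      have hmeas : ((2 : ENNReal) ^ Ebig)⁻¹ ≤ (P Mdeg : Measure ℝ) (Set.Ici c') := by
        rw [hmapIci Mdeg hM1 hMbot c', hμ Mdeg hMbot]
        exact ennconv2 _ _ Ebig hEM_pos hchain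
      exact ⟨Mdeg, le_trans hnk₀ (le_trans (Nat.le_mul_of_pos_left n (by positivity))
        (Nat.le_mul_of_pos_right _ (by omega))), hmeas⟩
    -- conclude positivity of ν on (0, ∞)
    have hlims : ((2 : ENNReal) ^ Ebig)⁻¹ ≤
        limsup (fun k => (P k : Measure ℝ) (Set.Ici c')) atTop :=
      le_limsup_of_frequently_le hfreq
    have hνIci : ((2 : ENNReal) ^ Ebig)⁻¹ ≤ ν (Set.Ici c') :=
      le_trans hlims (hclosed isClosed_Ici)
    have hν2 : 0 < ν (Set.Ioi (0:ℝ)) := by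
      have hIciIoi : Set.Ici c' ⊆ Set.Ioi (0:ℝ) := fun y hy => lt_of_lt_of_le hc'pos hy
      have hinvpos : (0 : ENNReal) < ((2 : ENNReal) ^ Ebig)⁻¹ :=
        ENNReal.inv_pos.mpr (ENNReal.pow_ne_top (by norm_num))
      exact lt_of_lt_of_le hinvpos (le_trans hνIci (measure_mono hIciIoi))
    -- ν vanishes above Mb := max M₀ 1
    set Mb : ℝ := max M₀ 1 with hMbdef
    have hνMb : ν (Set.Ioi Mb) = 0 := by
      have hz : ∀ᶠ n : ℕ in atTop, (P n : Measure ℝ) (Set.Ioi Mb) = 0 := by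
        filter_upwards [eventually_ge_atTop (max N 1)] with n hn
        have hn1 : 1 ≤ n := le_trans (le_max_right _ _) hn
        have hnN : N ≤ n := le_trans (le_max_left _ _) hn
        have hbot : ℰ n ≠ ⊥ := hN n hnN
        rw [hmapIoi n hn1 hbot Mb]
        have hn0 : (0:ℝ) < n := by exact_mod_cast hn1
        have hlamn : lamMax n ≤ M₀ * n := by
          have h := hM₀ n hn1
          rw [div_le_iff₀ hn0] at h
          linarith
        have hcov : Set.Ioi (Mb * n) ⊆ ⋃ k : ℕ, Set.Ici (Mb * n + 1/((k:ℝ)+1)) := by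
          intro y hy
          obtain ⟨k, hk⟩ := exists_nat_one_div_lt (sub_pos.mpr (Set.mem_Ioi.mp hy))
          refine Set.mem_iUnion.mpr ⟨k, ?_⟩
          rw [Set.mem_Ici]
          linarith [hk]
        refine measure_mono_null hcov (measure_iUnion_null fun k => ?_)
        rw [hμ n hbot]
        have hFb : F n (Mb * n + 1/((k:ℝ)+1)) = ⊥ := by
          apply F_eq_bot
          have h1 : M₀ * n ≤ Mb * n :=
            mul_le_mul_of_nonneg_right (le_max_left _ _) (le_of_lt hn0)
          have h2 : (0:ℝ) < 1/((k:ℝ)+1) := by positivity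
          linarith
        rw [hFb, finrank_bot]
        simp
      have h1 := hopen (isOpen_Ioi (a := Mb))
      have h2 : liminf (fun n => (P n : Measure ℝ) (Set.Ioi Mb)) atTop = 0 := by
        rw [liminf_congr hz]
        exact liminf_const 0
      exact le_antisymm (h2 ▸ h1) zero_le
    -- integrability on (0, ∞)
    have hres0 : ν.restrict (Set.Ioi (0:ℝ)) (Set.Ioi Mb) = 0 := by
      rw [Measure.restrict_apply measurableSet_Ioi]
      exact measure_mono_null Set.inter_subset_left hνMb
    have hae1 : ∀ᵐ y ∂ν.restrict (Set.Ioi (0:ℝ)), y ∈ Set.Ioi (0:ℝ) :=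
      ae_restrict_mem measurableSet_Ioi
    have hae2 : ∀ᵐ y ∂ν.restrict (Set.Ioi (0:ℝ)), y ≤ Mb := by
      rw [ae_iff]
      have hset : {y : ℝ | ¬ y ≤ Mb} = Set.Ioi Mb := by
        ext y; simp [not_le]
      rw [hset]
      exact hres0
    have hInt : IntegrableOn (fun y : ℝ => y) (Set.Ioi (0:ℝ)) ν := by
      refine Integrable.mono' (integrable_const Mb) aestronglyMeasurable_id ?_
      filter_upwards [hae1, hae2] with y hy1 hy2
      rw [Real.norm_eq_abs, abs_of_nonneg (le_of_lt hy1)]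
      exact hy2
    have hnn : 0 ≤ᵐ[ν.restrict (Set.Ioi (0:ℝ))] fun y : ℝ => y := by
      filter_upwards [hae1] with y hy using le_of_lt hy
    rw [setIntegral_pos_iff_support_of_nonneg_ae hnn hInt]
    have hsupp : (Function.support fun y : ℝ => y) ∩ Set.Ioi (0:ℝ) = Set.Ioi (0:ℝ) := by
      apply Set.inter_eq_self_of_subset_right
      intro y hy
      exact Function.mem_support.mpr (ne_of_gt hy)
    rw [hsupp]
    exact hν2
end
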